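/- arXiv:2006.12116 — 7 statements merged into one kernel-verified Lean document; each statement's English description precedes it below -/
import Mathlib

section
/- Let q be an odd prime power and a₁,a₂,a₃ nonzero polynomials in 𝔽_q[t]. If the multiplicities v_f(a₁), v_f(a₂), v_f(a₃) of a monic irreducible polynomial f in a₁, a₂, a₃ are all congruent modulo 2, then the equation a₁x₁² + a₂x₂² + a₃x₃² = 0 has a nontrivial solution in the f-adic completion of 𝔽_q(t). -/
/-!
Write `aᵢ = f ^ mᵢ * uᵢ` with `f ∤ uᵢ`. As the `mᵢ` share a parity `e`, the substitution
`xᵢ = f ^ (-⌊mᵢ/2⌋) * yᵢ` turns the form into `f ^ e * ∑ uᵢ yᵢ²`, whose coefficients are units.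
Reduced mod `f`, this is a ternary quadratic form over the finite residue field, so it has a
nontrivial zero by Chevalley–Warning. Some coordinate of that zero is a unit, and since the residue
characteristic is odd, Newton's iteration for square roots in the complete field corrects this one
coordinate to an exact zero.
-/

open IsDedekindDomain Polynomial Filter Topology

theorem MvPolynomial.exists_ne_zero_eval_eq_zero_of_totalDegree_lt {K σ : Type*} [Field K]
    [Fintype K] [Fintype σ] {F : MvPolynomial σ K} (hF : F.totalDegree < Fintype.card σ)
    (h0 : eval 0 F = 0) : ∃ x ≠ 0, eval x F = 0 := by
  classical
  have : CharP K (ringChar K) := ringChar.charP K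
  have hp : 2 ≤ ringChar K := (CharP.char_is_prime K (ringChar K)).two_le
  have hpos : 0 < Fintype.card {x : σ → K // eval x F = 0} := Fintype.card_pos_iff.mpr ⟨⟨0, h0⟩⟩
  have hcard := Nat.le_of_dvd hpos (char_dvd_card_solutions (ringChar K) hF)
  obtain ⟨⟨x, hx⟩, hne⟩ := Fintype.exists_ne_of_one_lt_card (by omega)
    (⟨0, h0⟩ : {x : σ → K // eval x F = 0})
  exact ⟨x, fun h => hne (Subtype.ext h), hx⟩

theorem FiniteField.exists_ne_zero_sum_mul_sq_eq_zero {K σ : Type*} [Field K] [Fintype K]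
    [Fintype σ] (hσ : 2 < Fintype.card σ) (b : σ → K) :
    ∃ c : σ → K, c ≠ 0 ∧ ∑ i, b i * c i ^ 2 = 0 := by
  have hdeg : (∑ i, MvPolynomial.C (b i) * MvPolynomial.X i ^ 2).totalDegree < Fintype.card σ :=
    calc _ ≤ 2 := (MvPolynomial.totalDegree_finsetSum _ _).trans <| Finset.sup_le fun i _ =>
            (MvPolynomial.totalDegree_mul _ _).trans (by simp [MvPolynomial.totalDegree_X_pow])
      _ < _ := hσ
  simpa using MvPolynomial.exists_ne_zero_eval_eq_zero_of_totalDegree_lt hdeg (by simp)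

namespace Valued

variable {R Γ₀ : Type*} [Ring R] [LinearOrderedCommGroupWithZero Γ₀] [Valued R Γ₀]

theorem tendsto_zero_of_valuation_le {ι : Type*} {l : Filter ι} {x y : ι → R}
    (hy : Tendsto y l (𝓝 0)) (hxy : ∀ i, v (x i) ≤ v (y i)) : Tendsto x l (𝓝 0) := by
  rw [(hasBasis_nhds_zero R Γ₀).tendsto_right_iff] at hy ⊢
  intro γ _
  filter_upwards [hy γ trivial] with i hi
  simp only [Valuation.restrict_lt_iff_lt_embedding] at hi ⊢
  exact (hxy i).trans_lt hi

theorem nonarchimedeanAddGroup : NonarchimedeanAddGroup R where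
  is_nonarchimedean U hU := by
    obtain ⟨γ, hγ⟩ := mem_nhds_zero.mp hU
    let V : AddSubgroup R := (v (R := R)).restrict.ltAddSubgroup γ
    exact ⟨⟨V, V.isOpen_of_mem_nhds (mem_nhds_zero.mpr ⟨γ, subset_rfl⟩)⟩, hγ⟩

end Valued

section CompleteValuedField

open Valued

variable {L Γ₀ : Type*} [Field L] [LinearOrderedCommGroupWithZero Γ₀] [Valued L Γ₀]

def newtonSqrt (z s : L) : ℕ → L
  | 0 => s
  | n + 1 => newtonSqrt z s n + (z - newtonSqrt z s n ^ 2) / (2 * newtonSqrt z s n)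

theorem valuation_newtonSqrt {z s : L} (h2 : v (2 : L) = 1) (hs : v s = 1)
    (hzs : v (z - s ^ 2) < 1) (n : ℕ) :
    v (newtonSqrt z s n) = 1 ∧ v (z - newtonSqrt z s n ^ 2) ≤ v (z - s ^ 2) ^ 2 ^ n := by
  induction n with
  | zero => simp [newtonSqrt, hs]
  | succ n ih =>
    obtain ⟨hw, hzw⟩ := ih
    set w := newtonSqrt z s n
    have hw0 : w ≠ 0 := by rintro h; simp [h] at hw
    have h20 : (2 : L) ≠ 0 := by rintro h; simp [h] at h2
    have hd : v ((z - w ^ 2) / (2 * w)) = v (z - w ^ 2) := by simp [h2, hw]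
    have hd1 : v (z - w ^ 2) < 1 :=
      hzw.trans_lt (pow_lt_one₀ zero_le hzs (pow_ne_zero _ two_ne_zero))
    refine ⟨?_, ?_⟩
    · rw [newtonSqrt, Valuation.map_add_eq_of_lt_left _ (by rwa [hd, hw]), hw]
    · have : z - newtonSqrt z s (n + 1) ^ 2 = -((z - w ^ 2) / (2 * w)) ^ 2 := by
        change z - (w + (z - w ^ 2) / (2 * w)) ^ 2 = _
        field_simp; ring
      rw [this, Valuation.map_neg, map_pow, hd, pow_succ 2 n, pow_mul]
      exact pow_le_pow_left' hzw 2

theorem exists_sq_eq_of_valuation_sub_sq_lt_one [MulArchimedean Γ₀] [CompleteSpace L]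
    {z s : L} (h2 : v (2 : L) = 1) (hs : v s = 1) (hzs : v (z - s ^ 2) < 1) :
    ∃ w : L, w ^ 2 = z := by
  have := nonarchimedeanAddGroup (R := L)
  have hpow : Tendsto (fun n : ℕ => (z - s ^ 2) ^ 2 ^ n) atTop (𝓝 0) :=
    (tendsto_zero_pow_of_v_lt_one hzs).comp (tendsto_pow_atTop_atTop_of_one_lt one_lt_two)
  have hres : Tendsto (fun n => z - newtonSqrt z s n ^ 2) atTop (𝓝 0) :=
    tendsto_zero_of_valuation_le hpow fun n => by
      simpa using (valuation_newtonSqrt h2 hs hzs n).2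
  have hstep : Tendsto (fun n => newtonSqrt z s (n + 1) - newtonSqrt z s n) atTop (𝓝 0) :=
    tendsto_zero_of_valuation_le hres fun n => by
      simp [newtonSqrt, h2, (valuation_newtonSqrt h2 hs hzs n).1]
  obtain ⟨w, hw⟩ := cauchySeq_tendsto_of_complete
    (NonarchimedeanAddGroup.cauchySeq_of_tendsto_sub_nhds_zero hstep)
  refine ⟨w, (sub_eq_zero.mp ?_).symm⟩
  exact tendsto_nhds_unique (tendsto_const_nhds.sub (hw.pow 2)) hres

theorem exists_isotropic_of_valuation_sum_lt_one [MulArchimedean Γ₀] [CompleteSpace L]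
    {ι : Type*} [Fintype ι] (h2 : v (2 : L) = 1) {u c : ι → L} {j : ι}
    (huj : v (u j) = 1) (hcj : v (c j) = 1) (hS : v (∑ i, u i * c i ^ 2) < 1) :
    ∃ y : ι → L, y ≠ 0 ∧ ∑ i, u i * y i ^ 2 = 0 := by
  classical
  set S := ∑ i, u i * c i ^ 2
  have huj0 : u j ≠ 0 := by rintro h; simp [h] at huj
  obtain ⟨w, hw⟩ : ∃ w : L, w ^ 2 = c j ^ 2 - S / u j :=
    exists_sq_eq_of_valuation_sub_sq_lt_one h2 hcj (by simpa [huj] using hS)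
  have hw0 : w ≠ 0 := by
    rintro rfl
    have h := congrArg v (sub_eq_zero.mp (hw.symm.trans (zero_pow two_ne_zero)))
    simp only [map_pow, map_div₀, hcj, huj, one_pow, div_one] at h
    exact hS.ne h.symm
  refine ⟨Function.update c j w, fun h => hw0 (by simpa using congrFun h j), ?_⟩
  have hrest : ∀ y : ι → L, ∑ i, u i * y i ^ 2 =
      u j * y j ^ 2 + ∑ i ∈ Finset.univ.erase j, u i * y i ^ 2 := fun y =>
    (Finset.add_sum_erase _ _ (Finset.mem_univ j)).symm
  have hS' : S = u j * c j ^ 2 + ∑ i ∈ Finset.univ.erase j, u i * c i ^ 2 := hrest c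
  rw [hrest, Finset.sum_congr rfl fun i hi => by
    rw [Function.update_of_ne (Finset.ne_of_mem_erase hi)]]
  rw [Function.update_self, hw, mul_sub, mul_div_cancel₀ _ huj0]
  linear_combination -hS'

end CompleteValuedField

namespace IsDedekindDomain.HeightOneSpectrum

variable {R K : Type*} [CommRing R] [IsDedekindDomain R] [Field K] [Algebra R K]
  [IsFractionRing R K] (v : HeightOneSpectrum R)

theorem valued_algebraMap_adicCompletion_lt_one_iff (r : R) :
    Valued.v (algebraMap R (v.adicCompletion K) r) < 1 ↔ r ∈ v.asIdeal := by
  rw [valuedAdicCompletion_eq_valuation, valuation_of_algebraMap, intValuation_lt_one_iff_mem]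

theorem valued_algebraMap_adicCompletion_eq_one_iff (r : R) :
    Valued.v (algebraMap R (v.adicCompletion K) r) = 1 ↔ r ∉ v.asIdeal := by
  rw [← v.valued_algebraMap_adicCompletion_lt_one_iff (K := K), not_lt]
  refine ⟨ge_of_eq, fun h => le_antisymm ?_ h⟩
  rw [valuedAdicCompletion_eq_valuation, valuation_of_algebraMap]
  exact v.intValuation_le_one r

theorem exists_isotropic_adicCompletion [Finite (R ⧸ v.asIdeal)] {ι : Type*} [Fintype ι]
    (hι : 2 < Fintype.card ι) (h2 : (2 : R) ∉ v.asIdeal) {u : ι → R}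
    (hu : ∀ i, u i ∉ v.asIdeal) :
    ∃ y : ι → v.adicCompletion K, y ≠ 0 ∧
      ∑ i, algebraMap R (v.adicCompletion K) (u i) * y i ^ 2 = 0 := by
  classical
  let := Ideal.Quotient.field v.asIdeal
  have := Fintype.ofFinite (R ⧸ v.asIdeal)
  obtain ⟨c, hc0, hc⟩ := FiniteField.exists_ne_zero_sum_mul_sq_eq_zero hι
    fun i => Ideal.Quotient.mk v.asIdeal (u i)
  choose c' hc' using fun i => Ideal.Quotient.mk_surjective (c i)
  obtain ⟨j, hj⟩ := Function.ne_iff.mp hc0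
  have hcj : c' j ∉ v.asIdeal := by rwa [← Ideal.Quotient.eq_zero_iff_mem, hc' j]
  have hS : ∑ i, u i * c' i ^ 2 ∈ v.asIdeal := by
    rw [← Ideal.Quotient.eq_zero_iff_mem]
    simpa [hc'] using hc
  refine exists_isotropic_of_valuation_sum_lt_one (c := fun i => algebraMap R _ (c' i)) (j := j)
    ?_ ((v.valued_algebraMap_adicCompletion_eq_one_iff _).mpr (hu j))
    ((v.valued_algebraMap_adicCompletion_eq_one_iff _).mpr hcj) ?_
  · have := (v.valued_algebraMap_adicCompletion_eq_one_iff (K := K) 2).mpr h2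
    rwa [map_ofNat] at this
  · simpa using (v.valued_algebraMap_adicCompletion_lt_one_iff (K := K) _).mpr hS

end IsDedekindDomain.HeightOneSpectrum

theorem exists_isotropic_pow_mul_of_forall_mod_two_eq {L ι : Type*} [Field L] [Fintype ι]
    {π : L} (hπ : π ≠ 0) {m : ι → ℕ} {e : ℕ} (hm : ∀ i, m i % 2 = e) {u : ι → L}
    (h : ∃ y : ι → L, y ≠ 0 ∧ ∑ i, u i * y i ^ 2 = 0) :
    ∃ x : ι → L, x ≠ 0 ∧ ∑ i, π ^ m i * u i * x i ^ 2 = 0 := by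
  obtain ⟨y, hy0, hy⟩ := h
  obtain ⟨j, hj⟩ := Function.ne_iff.mp hy0
  refine ⟨fun i => π⁻¹ ^ (m i / 2) * y i,
    Function.ne_iff.mpr ⟨j, mul_ne_zero (pow_ne_zero _ (inv_ne_zero hπ)) hj⟩, ?_⟩
  have hterm : ∀ i, π ^ m i * u i * (π⁻¹ ^ (m i / 2) * y i) ^ 2 = π ^ e * (u i * y i ^ 2) := by
    intro i
    obtain ⟨k, hk, hmi⟩ : ∃ k, m i / 2 = k ∧ m i = 2 * k + e :=
      ⟨_, rfl, by have := Nat.div_add_mod (m i) 2; have := hm i; omega⟩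
    rw [hk, hmi, pow_add, pow_mul, inv_pow]
    field_simp
    ring
  rw [Finset.sum_congr rfl fun i _ => hterm i, ← Finset.mul_sum, hy, mul_zero]

theorem FiniteField.two_ne_zero_of_odd_card {F : Type*} [Field F] [Fintype F]
    (h : Odd (Fintype.card F)) : (2 : F) ≠ 0 :=
  Ring.two_ne_zero fun h2 => by
    have := FiniteField.even_card_iff_char_two.mp h2
    have := Nat.odd_iff.mp h
    omega

theorem Polynomial.finite_quotient_span_singleton {F : Type*} [Field F] [Finite F] {f : F[X]}
    (hf : f ≠ 0) : Finite (F[X] ⧸ Ideal.span {f}) :=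
  have := (AdjoinRoot.powerBasis hf).finite
  Module.finite_of_finite F (M := AdjoinRoot f)

theorem stmt0_general (Fq : Type) [Field Fq] [Fintype Fq] (hq : Odd (Fintype.card Fq))
    (f : Polynomial Fq) (hirr : Irreducible f)
    (a : Fin 3 → Polynomial Fq)
    (m : Fin 3 → ℕ) (hm : ∀ i, f ^ (m i) ∣ a i ∧ ¬ f ^ (m i + 1) ∣ a i)
    (hpar : ∀ i j, m i % 2 = m j % 2)
    (v : HeightOneSpectrum (Polynomial Fq)) (hv : v.asIdeal = Ideal.span {f}) :
    ∃ x : Fin 3 → v.adicCompletion (RatFunc Fq), x ≠ 0 ∧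
      ∑ i, algebraMap (Polynomial Fq) (v.adicCompletion (RatFunc Fq)) (a i) * x i ^ 2 = 0 := by
  obtain ⟨u, hau, hu⟩ :
      ∃ u : Fin 3 → Fq[X], (∀ i, a i = f ^ m i * u i) ∧ ∀ i, u i ∉ v.asIdeal := by
    choose u hu using fun i => (hm i).1
    refine ⟨u, hu, fun i hi => (hm i).2 ?_⟩
    obtain ⟨w, hw⟩ := Ideal.mem_span_singleton.mp (hv ▸ hi)
    exact ⟨w, by rw [hu i, hw, pow_succ, mul_assoc]⟩
  have : Finite (Fq[X] ⧸ v.asIdeal) := hv ▸ finite_quotient_span_singleton hirr.ne_zero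
  have h2 : (2 : Fq[X]) ∉ v.asIdeal := by
    have : IsUnit (C (2 : Fq)) := isUnit_C.mpr (FiniteField.two_ne_zero_of_odd_card hq).isUnit
    rw [map_ofNat] at this
    exact fun h => v.isPrime.ne_top (Ideal.eq_top_of_isUnit_mem _ h this)
  have hf0 : algebraMap Fq[X] (v.adicCompletion (RatFunc Fq)) f ≠ 0 := by
    rw [IsScalarTower.algebraMap_apply Fq[X] (RatFunc Fq), _root_.map_ne_zero]
    exact (map_ne_zero_iff _ (IsFractionRing.injective _ _)).mpr hirr.ne_zero
  simpa [hau] using exists_isotropic_pow_mul_of_forall_mod_two_eq hf0 (fun i => hpar i 0)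
    (v.exists_isotropic_adicCompletion (K := RatFunc Fq) (by simp) h2 hu)

/-- If the multiplicities of a monic irreducible `f` in nonzero polynomials
`a₁, a₂, a₃` over a finite field of odd order are all congruent mod 2, then
`a₁x₁² + a₂x₂² + a₃x₃² = 0` has a nontrivial solution in the `f`-adic completion of `𝔽_q(t)`. -/
theorem stmt0 (Fq : Type) [Field Fq] [Fintype Fq] (hq : Odd (Fintype.card Fq))
    (f : Polynomial Fq) (hf : f.Monic) (hirr : Irreducible f)
    (a : Fin 3 → Polynomial Fq) (ha : ∀ i, a i ≠ 0)
    (m : Fin 3 → ℕ) (hm : ∀ i, f ^ (m i) ∣ a i ∧ ¬ f ^ (m i + 1) ∣ a i)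
    (hpar : ∀ i j, m i % 2 = m j % 2)
    (v : HeightOneSpectrum (Polynomial Fq)) (hv : v.asIdeal = Ideal.span {f}) :
    ∃ x : Fin 3 → v.adicCompletion (RatFunc Fq), x ≠ 0 ∧
      ∑ i, algebraMap (Polynomial Fq) (v.adicCompletion (RatFunc Fq)) (a i) * x i ^ 2 = 0 :=
  stmt0_general Fq hq f hirr a m hm hpar v hv
end

section
/- Let q be an odd prime power, f a monic irreducible polynomial in 𝔽_q[t], and a₁,a₂,a₃ nonzero polynomials such that v_f(a_i) ≡ v_f(a_j) (mod 2) for some i ≠ j but not all three multiplicities v_f(a₁), v_f(a₂), v_f(a₃) have the same parity. Then a₁x₁² + a₂x₂² + a₃x₃² = 0 has a nontrivial solution in the f-adic completion 𝔽_q(t)_(f) if and only if −f^{−v_f(a_i a_j)} a_i a_j is a square modulo f. -/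
/-!
Write `tₗ = aₗ xₗ²` and let `k` be the index other than `i, j`. The valuation of a nonzero `tₗ`
has the parity of `v_f(aₗ)`, so `t_k` cannot tie in valuation with `t_i` or `t_j`; by the
ultrametric inequality `t_i` and `t_j` then have equal valuation and strictly dominate `t_k`.
Hence `-t_i/t_j` is a `1`-unit, i.e. `-a_i a_j` is a square up to a `1`-unit, and as `2` is a
unit, Newton's iteration for the square root shows that `-a_i a_j = f^{2s} (-b)` is a square in
the completion. Conversely a square root `c` of `-a_i a_j` gives the solution `(c, a_i, 0)`.
Finally a unit of `𝔽_q[t]` is a square in the completion iff it is a square modulo `f`: a square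
root can be approximated by a polynomial, and a square root modulo `f` lifts by Newton's iteration.
-/

open Filter Topology WithZero IsDedekindDomain Polynomial

namespace Valuation

theorem map_eq_and_lt_of_add_add_eq_zero {R Γ₀ : Type*} [Ring R]
    [LinearOrderedCommMonoidWithZero Γ₀] (v : Valuation R Γ₀) {x y z : R} (h : x + y + z = 0)
    (hzx : v z ≠ v x) (hzy : v z ≠ v y) : v x = v y ∧ v z < v x := by
  have hz : v z = v (x + y) := by rw [← v.map_neg, ← add_eq_zero_iff_neg_eq'.mp h]
  have hxy : v x = v y := by
    by_contra hne
    rw [v.map_add_of_distinct_val hne] at hz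
    rcases max_choice (v x) (v y) with hmax | hmax <;> rw [hmax] at hz
    exacts [hzx hz, hzy hz]
  refine ⟨hxy, lt_of_le_of_ne ?_ hzx⟩
  simpa [hz, hxy] using v.map_add x y

theorem map_newton_sqrt_step {L Γ₀ : Type*} [Field L] [LinearOrderedCommGroupWithZero Γ₀]
    (v : Valuation L Γ₀) (h2 : v 2 = 1) {u c : L} (hc : v c = 1) :
    v ((c + u / c) / 2 - c) = v (c ^ 2 - u) ∧
      v (((c + u / c) / 2) ^ 2 - u) = v (c ^ 2 - u) ^ 2 := by
  have hc0 : c ≠ 0 := v.ne_zero_iff.mp (by simp [hc])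
  have h20 : (2 : L) ≠ 0 := v.ne_zero_iff.mp (by simp [h2])
  have hstep : (c + u / c) / 2 - c = -(c ^ 2 - u) / (2 * c) := by field_simp; ring
  have hsq : ((c + u / c) / 2) ^ 2 - u = ((c ^ 2 - u) / (2 * c)) ^ 2 := by field_simp; ring
  rw [hstep, hsq]
  simp [h2, hc, Valuation.map_sub_swap]

variable {L : Type*} [Field L] (v : Valuation L ℤᵐ⁰)

theorem eq_zero_of_map_mul_sq_eq {α β x y : L} {a b : ℤ} (hα : v α = exp a) (hβ : v β = exp b)
    (hab : a % 2 ≠ b % 2) (h : v (α * x ^ 2) = v (β * y ^ 2)) : x = 0 ∧ y = 0 := by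
  simp only [map_mul, map_pow, hα, hβ] at h
  by_cases hx : x = 0
  · simp_all
  by_cases hy : y = 0
  · simp_all
  rw [← exp_log (v.ne_zero_iff.mpr hx), ← exp_log (v.ne_zero_iff.mpr hy), ← exp_nsmul,
    ← exp_nsmul, ← exp_add, ← exp_add, exp_inj] at h
  simp only [nsmul_eq_mul] at h
  omega

theorem exists_sub_sq_lt_of_isotropic {α β γ x y z : L} {a b c : ℤ} (hα : v α = exp a)
    (hβ : v β = exp b) (hγ : v γ = exp c) (hab : a % 2 = b % 2) (hac : a % 2 ≠ c % 2)
    (h : α * x ^ 2 + β * y ^ 2 + γ * z ^ 2 = 0) (hne : ¬(x = 0 ∧ y = 0 ∧ z = 0)) :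
    ∃ w, v (-(α * β) - w ^ 2) < v (-(α * β)) := by
  have hα0 : α ≠ 0 := v.ne_zero_iff.mp (by simp [hα])
  have hβ0 : β ≠ 0 := v.ne_zero_iff.mp (by simp [hβ])
  have hγx : v (γ * z ^ 2) ≠ v (α * x ^ 2) := fun hv => by
    obtain ⟨rfl, rfl⟩ := v.eq_zero_of_map_mul_sq_eq hγ hα (Ne.symm hac) hv
    simp_all
  have hγy : v (γ * z ^ 2) ≠ v (β * y ^ 2) := fun hv => by
    obtain ⟨rfl, rfl⟩ := v.eq_zero_of_map_mul_sq_eq hγ hβ (by omega) hv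
    simp_all
  obtain ⟨-, hlt⟩ := v.map_eq_and_lt_of_add_add_eq_zero h hγx hγy
  have hx : x ≠ 0 := by
    rintro rfl
    simp at hlt
  refine ⟨β * y / x, ?_⟩
  have hnear : -(α * β) - (β * y / x) ^ 2 = β / x ^ 2 * (γ * z ^ 2) := by
    have hx2 : x ^ 2 * (x ^ 2)⁻¹ = 1 := mul_inv_cancel₀ (pow_ne_zero 2 hx)
    linear_combination (-(β / x ^ 2)) * h + α * β * hx2
  have hprod : α * β = β / x ^ 2 * (α * x ^ 2) := by field_simp
  rw [Valuation.map_neg, hnear, hprod, map_mul, map_mul v (β / x ^ 2) (α * x ^ 2)]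
  exact mul_lt_mul_of_pos_left hlt (zero_lt_iff.mpr (by simp [hβ0, hx]))

end Valuation

instance Valued.nonarchimedeanAddGroup_s1 {R Γ₀ : Type*} [Ring R] [LinearOrderedCommGroupWithZero Γ₀]
    [Valued R Γ₀] : NonarchimedeanAddGroup R where
  is_nonarchimedean U hU := by
    obtain ⟨γ, hγ⟩ := Valued.mem_nhds_zero.mp hU
    let V := Valued.v.restrict.ltAddSubgroup γ
    exact ⟨⟨V, V.isOpen_of_mem_nhds (Valued.mem_nhds_zero.mpr ⟨γ, subset_rfl⟩)⟩, hγ⟩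

namespace Valued
variable {Γ₀ : Type*} [LinearOrderedCommGroupWithZero Γ₀]

theorem tendsto_zero_of_v_le {R : Type*} [Ring R] [Valued R Γ₀] {d e : ℕ → R}
    (hde : ∀ n, v (d n) ≤ v (e n)) (he : Tendsto e atTop (𝓝 0)) : Tendsto d atTop (𝓝 0) := by
  rw [(hasBasis_nhds_zero R Γ₀).tendsto_right_iff] at he ⊢
  intro γ _
  filter_upwards [he γ trivial] with n hn
  simp only [Valuation.restrict_lt_iff_lt_embedding] at hn ⊢
  exact (hde n).trans_lt hn

variable {L : Type*} [Field L] [Valued L Γ₀]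

theorem isSquare_of_v_sub_one_lt_one [MulArchimedean Γ₀] [CompleteSpace L] (h2 : v (2 : L) = 1)
    {u : L} (hu : v (u - 1) < 1) : IsSquare u := by
  have hδ : v (1 - u) < 1 := by rwa [Valuation.map_sub_swap]
  set δ := v (1 - u)
  let c : ℕ → L := fun n => Nat.rec 1 (fun _ b => (b + u / b) / 2) n
  have hinv : ∀ n, v (c n) = 1 ∧ v (c n ^ 2 - u) ≤ δ ^ (n + 1) := by
    intro n
    induction n with
    | zero => simp [c, δ]
    | succ n ih =>
      obtain ⟨hc, he⟩ := ih
      obtain ⟨hdiff, hsq⟩ := v.map_newton_sqrt_step h2 (u := u) hc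
      have hlt : v (c n ^ 2 - u) < 1 := he.trans_lt (pow_lt_one₀ zero_le hδ (by omega))
      refine ⟨?_, ?_⟩
      · rw [← hc]
        exact v.map_eq_of_sub_lt (by rwa [hdiff, hc])
      · change v (((c n + u / c n) / 2) ^ 2 - u) ≤ _
        rw [hsq]
        calc v (c n ^ 2 - u) ^ 2 ≤ (δ ^ (n + 1)) ^ 2 := pow_le_pow_left₀ zero_le he 2
          _ ≤ δ ^ (n + 1 + 1) := by
            rw [← pow_mul]; exact pow_le_pow_right_of_le_one' hδ.le (by omega)
  have hpow : Tendsto (fun n => (1 - u) ^ (n + 1)) atTop (𝓝 0) :=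
    (tendsto_add_atTop_iff_nat 1).mpr (tendsto_zero_pow_of_v_lt_one hδ)
  have herr : Tendsto (fun n => c n ^ 2 - u) atTop (𝓝 0) :=
    tendsto_zero_of_v_le (fun n => by simpa using (hinv n).2) hpow
  have hcauchy : CauchySeq c := by
    refine NonarchimedeanAddGroup.cauchySeq_of_tendsto_sub_nhds_zero (tendsto_zero_of_v_le ?_ herr)
    intro n
    exact (v.map_newton_sqrt_step h2 (hinv n).1).1.le
  obtain ⟨l, hl⟩ := cauchySeq_tendsto_of_complete hcauchy
  refine ⟨l, ?_⟩
  have hlim : Tendsto (fun n => c n ^ 2 - u) atTop (𝓝 (l ^ 2 - u)) :=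
    (hl.pow 2).sub tendsto_const_nhds
  rw [← sq, ← sub_eq_zero.mp (tendsto_nhds_unique hlim herr)]

theorem isSquare_of_v_sub_sq_lt [MulArchimedean Γ₀] [CompleteSpace L] (h2 : v (2 : L) = 1)
    {u w : L} (huw : v (u - w ^ 2) < v u) : IsSquare u := by
  have hw2 : v (w ^ 2) = v u := v.map_eq_of_sub_lt (by rwa [Valuation.map_sub_swap])
  have hw0 : w ^ 2 ≠ 0 := v.ne_zero_iff.mp (hw2 ▸ (zero_le.trans_lt huw).ne')
  obtain ⟨s, hs⟩ : IsSquare (u / w ^ 2) := by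
    refine isSquare_of_v_sub_one_lt_one h2 ?_
    rw [← div_self hw0, ← sub_div, map_div₀, hw2]
    exact (div_lt_one₀ (zero_le.trans_lt huw)).mpr huw
  exact ⟨w * s, by rw [← mul_mul_mul_comm, ← hs, ← sq, mul_div_cancel₀ _ hw0]⟩

end Valued

namespace IsDedekindDomain.HeightOneSpectrum

theorem ne_zero_of_asIdeal_eq_span {R : Type*} [CommRing R] (v : HeightOneSpectrum R) {f : R}
    (hv : v.asIdeal = Ideal.span {f}) : f ≠ 0 := by
  rintro rfl
  exact v.ne_bot (by simpa using hv)

variable {R : Type*} [CommRing R] [IsDedekindDomain R] (v : HeightOneSpectrum R)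

theorem intValuation_eq_one_of_eq_pow_mul {f r b : R} (hv : v.asIdeal = Ideal.span {f}) {m : ℕ}
    (hr : v.intValuation r = exp (-(m : ℤ))) (h : r = f ^ m * b) : v.intValuation b = 1 := by
  rw [h, map_mul, map_pow, v.intValuation_singleton (v.ne_zero_of_asIdeal_eq_span hv) hv,
    ← exp_nsmul] at hr
  refine (mul_eq_left₀ exp_ne_zero).mp (hr.trans ?_)
  simp

theorem intValuation_eq_exp_neg_of_dvd {f r : R} (hv : v.asIdeal = Ideal.span {f}) {m : ℕ}
    (hdvd : f ^ m ∣ r) (hndvd : ¬f ^ (m + 1) ∣ r) : v.intValuation r = exp (-(m : ℤ)) := by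
  simp only [← Ideal.mem_span_singleton, ← Ideal.span_singleton_pow, ← hv,
    ← intValuation_le_pow_iff_mem] at hdvd hndvd
  have hr : v.intValuation r ≠ 0 := fun h => hndvd (by simp [h])
  rw [← exp_log hr, exp_le_exp] at hdvd hndvd
  rw [← exp_log hr, exp_inj]
  push_cast at hndvd
  omega

variable {K : Type*} [Field K] [Algebra R K] [IsFractionRing R K]

@[simp]
theorem valued_algebraMap_adicCompletion (r : R) :
    Valued.v (algebraMap R (v.adicCompletion K) r) = v.intValuation r := by
  rw [valuedAdicCompletion_eq_valuation, valuation_of_algebraMap]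

theorem exists_valued_sub_algebraMap_lt_one {y : v.adicCompletion K} (hy : Valued.v y ≤ 1) :
    ∃ r : R, Valued.v (y - algebraMap R (v.adicCompletion K) r) < 1 := by
  have hball : {z : v.adicCompletion K | Valued.v (z - y) < 1} ∈ 𝓝 y :=
    Valued.mem_nhds.mpr ⟨1, fun z hz => by simpa using hz⟩
  obtain ⟨-, hk, k, rfl⟩ := mem_closure_iff_nhds.mp (denseRange_algebraMap K v y) _ hball
  have hvk (k' : K) : Valued.v (algebraMap K (v.adicCompletion K) k') = v.valuation K k' :=
    valuedAdicCompletion_eq_valuation' v k'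
  have hk1 : v.valuation K k ≤ 1 := by
    rw [← hvk, ← sub_add_cancel (algebraMap K _ k) y]
    exact (Valued.v.map_add _ _).trans (max_le hk.out.le hy)
  obtain ⟨r, hr⟩ := v.exists_valuation_sub_lt_of_integer hk1 1
  refine ⟨r, ?_⟩
  have hkr : Valued.v (algebraMap K (v.adicCompletion K) (k - algebraMap R K r)) < 1 := by
    rw [hvk, Valuation.map_sub_swap]
    exact_mod_cast hr
  rw [IsScalarTower.algebraMap_apply R K, ← sub_sub_sub_cancel_left _ _ (algebraMap K _ k),
    ← map_sub]
  exact Valued.v.map_sub_lt hkr hk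

theorem valued_two_eq_one (h2 : (2 : R) ∉ v.asIdeal) : Valued.v (2 : v.adicCompletion K) = 1 := by
  rw [← map_ofNat (algebraMap R (v.adicCompletion K)) 2, valued_algebraMap_adicCompletion,
    intValuation_eq_one_iff]
  exact h2

theorem isSquare_algebraMap_adicCompletion_iff (h2 : (2 : R) ∉ v.asIdeal) {r : R}
    (hr : r ∉ v.asIdeal) :
    IsSquare (algebraMap R (v.adicCompletion K) r) ↔ IsSquare (Ideal.Quotient.mk v.asIdeal r) := by
  set A := algebraMap R (v.adicCompletion K)
  constructor
  · rintro ⟨y, hy⟩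
    have hy1 : Valued.v y ≤ 1 := by
      rw [← pow_le_one_iff two_ne_zero, ← map_pow, sq, ← hy, valued_algebraMap_adicCompletion]
      exact v.intValuation_le_one r
    obtain ⟨p, hp⟩ := v.exists_valued_sub_algebraMap_lt_one hy1
    have hp1 : Valued.v (y + A p) ≤ 1 :=
      (Valued.v.map_add _ _).trans (max_le hy1 (by simpa [A] using v.intValuation_le_one p))
    refine ⟨Ideal.Quotient.mk _ p, ?_⟩
    rw [← map_mul, Ideal.Quotient.eq, ← intValuation_lt_one_iff_mem,
      ← valued_algebraMap_adicCompletion (K := K), map_sub, map_mul, hy, mul_self_sub_mul_self,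
      map_mul]
    exact (mul_le_of_le_one_left' hp1).trans_lt hp
  · rintro ⟨q, hq⟩
    obtain ⟨p, rfl⟩ := Ideal.Quotient.mk_surjective q
    rw [← map_mul, Ideal.Quotient.eq, ← intValuation_lt_one_iff_mem] at hq
    refine Valued.isSquare_of_v_sub_sq_lt (v.valued_two_eq_one h2) (w := A p) ?_
    rw [← map_pow, ← map_sub, valued_algebraMap_adicCompletion, valued_algebraMap_adicCompletion,
      intValuation_eq_one_iff.mpr hr, sq]
    exact hq

theorem two_notMem_asIdeal {F : Type*} [Field F] (hF : ringChar F ≠ 2)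
    (v : HeightOneSpectrum F[X]) : (2 : F[X]) ∉ v.asIdeal := by
  refine Ideal.notMem_of_isUnit _ ?_
  rw [← map_ofNat C 2]
  exact isUnit_C.mpr (Ring.two_ne_zero hF).isUnit

end IsDedekindDomain.HeightOneSpectrum

theorem isSquare_sq_mul_iff {G : Type*} [CommGroupWithZero G] {c u : G} (hc : c ≠ 0) :
    IsSquare (c ^ 2 * u) ↔ IsSquare u :=
  ⟨fun h => by simpa [hc] using h.div (IsSquare.sq c), (IsSquare.sq c).mul⟩

theorem Fin.exists_univ_eq_triple {i j : Fin 3} (hij : i ≠ j) :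
    ∃ k, k ≠ i ∧ k ≠ j ∧ (Finset.univ : Finset (Fin 3)) = {i, j, k} := by
  revert i j
  decide

theorem Valued.exists_sum_mul_sq_eq_zero_iff_isSquare {L : Type*} [Field L] [Valued L ℤᵐ⁰]
    [CompleteSpace L] (h2 : v (2 : L) = 1) {α : Fin 3 → L} {n : Fin 3 → ℤ}
    (hα : ∀ l, v (α l) = exp (n l)) {i j : Fin 3} (hij : i ≠ j) (hpar : n i % 2 = n j % 2)
    (hnotall : ¬∀ k l, n k % 2 = n l % 2) :
    (∃ x : Fin 3 → L, x ≠ 0 ∧ ∑ l, α l * x l ^ 2 = 0) ↔ IsSquare (-(α i * α j)) := by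
  obtain ⟨k, hki, hkj, huniv⟩ := Fin.exists_univ_eq_triple hij
  have hl : ∀ l, l = i ∨ l = j ∨ l = k := by simpa [Finset.ext_iff] using huniv
  have hsum (g : Fin 3 → L) : ∑ l, g l = g i + g j + g k := by
    rw [huniv, Finset.sum_insert (by simp [hij, hki.symm]), Finset.sum_pair hkj.symm, add_assoc]
  constructor
  · rintro ⟨x, hx0, hx⟩
    have hpark : n i % 2 ≠ n k % 2 := fun h => hnotall fun l l' => by
      rcases hl l with rfl | rfl | rfl <;> rcases hl l' with rfl | rfl | rfl <;> omega
    have hne : ¬(x i = 0 ∧ x j = 0 ∧ x k = 0) := fun ⟨hi, hj, hk⟩ =>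
      hx0 (funext fun l => by rcases hl l with rfl | rfl | rfl <;> assumption)
    rw [hsum] at hx
    obtain ⟨w, hw⟩ := v.exists_sub_sq_lt_of_isotropic (hα i) (hα j) (hα k) hpar hpark hx hne
    exact isSquare_of_v_sub_sq_lt h2 hw
  · rintro ⟨c, hc⟩
    have hαi : α i ≠ 0 := v.ne_zero_iff.mp (by simp [hα])
    refine ⟨Pi.single i c + Pi.single j (α i), fun h => hαi ?_, ?_⟩
    · simpa [hij.symm] using congrFun h j
    · rw [hsum]
      simp only [Pi.add_apply, Pi.single_eq_same, Pi.single_eq_of_ne, hij, hij.symm, hki, hkj,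
        ne_eq, not_false_eq_true, add_zero, zero_add, OfNat.ofNat_ne_zero, zero_pow, mul_zero]
      linear_combination (-α i) * hc

theorem stmt1_general (Fq : Type) [Field Fq] [Fintype Fq] (hq : Odd (Fintype.card Fq))
    (f : Polynomial Fq)
    (a : Fin 3 → Polynomial Fq)
    (m : Fin 3 → ℕ) (hm : ∀ k, f ^ (m k) ∣ a k ∧ ¬ f ^ (m k + 1) ∣ a k)
    (i j : Fin 3) (hij : i ≠ j) (hpar : m i % 2 = m j % 2)
    (hnotall : ¬ ∀ k l, m k % 2 = m l % 2)
    (b : Polynomial Fq) (hb : a i * a j = f ^ (m i + m j) * b)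
    (v : HeightOneSpectrum (Polynomial Fq)) (hv : v.asIdeal = Ideal.span {f}) :
    (∃ x : Fin 3 → v.adicCompletion (RatFunc Fq), x ≠ 0 ∧
        ∑ k, algebraMap (Polynomial Fq) (v.adicCompletion (RatFunc Fq)) (a k) * x k ^ 2 = 0)
      ↔ IsSquare (Ideal.Quotient.mk (Ideal.span {f}) (-b)) := by
  set A := algebraMap Fq[X] (v.adicCompletion (RatFunc Fq))
  have hva (l : Fin 3) : v.intValuation (a l) = exp (-(m l : ℤ)) :=
    v.intValuation_eq_exp_neg_of_dvd hv (hm l).1 (hm l).2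
  have hAf0 : A f ≠ 0 := Valued.v.ne_zero_iff.mp <| by
    simpa [A] using v.intValuation_ne_zero f (v.ne_zero_of_asIdeal_eq_span hv)
  have hbv : -b ∉ v.asIdeal := by
    rw [neg_mem_iff, ← HeightOneSpectrum.intValuation_eq_one_iff]
    refine v.intValuation_eq_one_of_eq_pow_mul hv ?_ hb
    rw [map_mul, hva, hva, ← exp_add]
    congr 1
    push_cast
    ring
  have h2 : (2 : Fq[X]) ∉ v.asIdeal := HeightOneSpectrum.two_notMem_asIdeal (fun h =>
    Nat.not_even_iff_odd.mpr hq (Nat.even_iff.mpr (FiniteField.even_card_iff_char_two.mp h))) v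
  obtain ⟨s, hs⟩ : ∃ s, m i + m j = 2 * s := ⟨(m i + m j) / 2, by omega⟩
  have hAA : -(A (a i) * A (a j)) = (A f ^ s) ^ 2 * A (-b) := by
    rw [← map_mul, hb, hs, map_neg, map_mul, map_pow, pow_mul', mul_neg]
  have hvA (l : Fin 3) : Valued.v (A (a l)) = exp (-(m l : ℤ)) :=
    (v.valued_algebraMap_adicCompletion (a l)).trans (hva l)
  have hnotall' : ¬∀ k l, -(m k : ℤ) % 2 = -(m l : ℤ) % 2 := fun h => hnotall fun k l => by
    have := h k l
    omega
  rw [Valued.exists_sum_mul_sq_eq_zero_iff_isSquare (v.valued_two_eq_one h2) hvA hij (by omega)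
      hnotall', hAA, isSquare_sq_mul_iff (pow_ne_zero s hAf0), ← hv,
    HeightOneSpectrum.isSquare_algebraMap_adicCompletion_iff v h2 hbv]

/-- Mixed-parity local solvability criterion at a finite place `f`:
if `v_f(a_i) ≡ v_f(a_j) (mod 2)` for some `i ≠ j` but not all three multiplicities have the
same parity, then `a₁x₁² + a₂x₂² + a₃x₃² = 0` is nontrivially solvable in the `f`-adic
completion iff `−f^{−v_f(a_i a_j)} a_i a_j` is a square modulo `f`. -/
theorem stmt1 (Fq : Type) [Field Fq] [Fintype Fq] (hq : Odd (Fintype.card Fq))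
    (f : Polynomial Fq) (hf : f.Monic) (hirr : Irreducible f)
    (a : Fin 3 → Polynomial Fq) (ha : ∀ k, a k ≠ 0)
    (m : Fin 3 → ℕ) (hm : ∀ k, f ^ (m k) ∣ a k ∧ ¬ f ^ (m k + 1) ∣ a k)
    (i j : Fin 3) (hij : i ≠ j) (hpar : m i % 2 = m j % 2)
    (hnotall : ¬ ∀ k l, m k % 2 = m l % 2)
    (b : Polynomial Fq) (hb : a i * a j = f ^ (m i + m j) * b)
    (v : HeightOneSpectrum (Polynomial Fq)) (hv : v.asIdeal = Ideal.span {f}) :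
    (∃ x : Fin 3 → v.adicCompletion (RatFunc Fq), x ≠ 0 ∧
        ∑ k, algebraMap (Polynomial Fq) (v.adicCompletion (RatFunc Fq)) (a k) * x k ^ 2 = 0)
      ↔ IsSquare (Ideal.Quotient.mk (Ideal.span {f}) (-b)) :=
  stmt1_general Fq hq f a m hm i j hij hpar hnotall b hb v hv
end

section
/- Let q be an odd prime power and a₁,a₂,a₃ nonzero polynomials in 𝔽_q[t]. If deg(a₁), deg(a₂), deg(a₃) all have the same parity, then the equation a₁x₁² + a₂x₂² + a₃x₃² = 0 admits a nontrivial solution in the field of formal Laurent series 𝔽_q((1/t)). -/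
open Polynomial

/-!
Let `X = 1/t` be the uniformizer of `𝔽_q((1/t))`. If `dᵢ = deg aᵢ = 2mᵢ + r`, then
`aᵢ(t) = X^(-dᵢ) ãᵢ(X)` with `ãᵢ` the reversed polynomial, a power series whose constant term is
the leading coefficient of `aᵢ`. Substituting `xᵢ = X^mᵢ yᵢ` turns the equation into
`X^(-r) ∑ ãᵢ yᵢ² = 0` over `𝔽_q[[X]]`, with the same `r` for all three terms by the parity
hypothesis. Modulo `X` this is a diagonal conic over `𝔽_q`, which has a point `(l₀, l₁, 1)`;
since `2` is a unit, the point lifts to `𝔽_q[[X]]` by extracting a square root of a power series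
with nonzero square constant term.
-/

theorem FiniteField.exists_mul_sq_add_mul_sq_add_eq_zero {F : Type*} [Field F] [Fintype F]
    (hF : Odd (Fintype.card F)) {c₀ c₁ : F} (h₀ : c₀ ≠ 0) (h₁ : c₁ ≠ 0) (c₂ : F) :
    ∃ x y : F, c₀ * x ^ 2 + c₁ * y ^ 2 + c₂ = 0 := by
  have hdeg : (C c₁ * X ^ 2 + C c₂).degree = 2 := by
    rw [degree_add_eq_left_of_degree_lt] <;> rw [degree_C_mul_X_pow 2 h₁]
    · rfl
    · exact degree_C_le.trans_lt (by norm_num)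
  obtain ⟨x, y, h⟩ := exists_root_sum_quadratic (degree_C_mul_X_pow 2 h₀) hdeg
    (Nat.odd_iff.mp hF)
  exact ⟨x, y, by simpa [add_assoc] using h⟩

namespace PowerSeries

theorem coeff_succ_sq {R : Type*} [CommSemiring R] (g : PowerSeries R) (n : ℕ) :
    coeff (n + 1) (g ^ 2) = 2 * (constantCoeff g * coeff (n + 1) g)
      + ∑ i ∈ Finset.range n, coeff (i + 1) g * coeff (n - i) g := by
  rw [sq, coeff_mul, Finset.Nat.sum_antidiagonal_eq_sum_range_succ_mk, Finset.sum_range_succ,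
    Finset.sum_range_succ']
  simp only [Nat.add_sub_add_right, Nat.sub_self, Nat.sub_zero, coeff_zero_eq_constantCoeff_apply]
  ring

variable {F : Type*} [Field F]

/-- The coefficients of the square root of `f` with constant term `b`, solved for one at a time
from `coeff_succ_sq`. -/
noncomputable def sqrtCoeff (f : PowerSeries F) (b : F) : ℕ → F
  | 0 => b
  | n + 1 => (coeff (n + 1) f
      - ∑ i : Fin n, sqrtCoeff f b (i + 1) * sqrtCoeff f b (n - i)) / (2 * b)

theorem exists_sq_eq_of_constantCoeff_eq_sq (h2 : (2 : F) ≠ 0) {f : PowerSeries F} {b : F}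
    (hb : b ≠ 0) (hf : constantCoeff f = b ^ 2) : ∃ g : PowerSeries F, g ^ 2 = f := by
  refine ⟨mk (sqrtCoeff f b), ?_⟩
  ext (_ | n)
  · simp [hf, sqrtCoeff]
  · rw [coeff_succ_sq, ← coeff_zero_eq_constantCoeff_apply]
    simp only [coeff_mk]
    rw [sqrtCoeff.eq_2, sqrtCoeff.eq_1,
      Fin.sum_univ_eq_sum_range (fun i => sqrtCoeff f b (i + 1) * sqrtCoeff f b (n - i))]
    field_simp
    ring

theorem exists_mul_sq_add_eq_zero (h2 : (2 : F) ≠ 0) {u v : PowerSeries F}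
    (hu : constantCoeff u ≠ 0) {l : F} (hl : l ≠ 0)
    (h : constantCoeff u * l ^ 2 + constantCoeff v = 0) :
    ∃ g : PowerSeries F, u * g ^ 2 + v = 0 := by
  obtain ⟨g, hg⟩ := exists_sq_eq_of_constantCoeff_eq_sq h2 hl (f := -v * u⁻¹) (by
    rw [map_mul, map_neg, constantCoeff_inv, eq_neg_of_add_eq_zero_right h]
    field_simp)
  refine ⟨g, ?_⟩
  rw [hg, mul_comm, mul_assoc, PowerSeries.inv_mul_cancel u hu]
  ring

theorem exists_ne_zero_sum_mul_sq_eq_zero [Fintype F] (hF : Odd (Fintype.card F))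
    (v : Fin 3 → PowerSeries F) (hv : ∀ i, constantCoeff (v i) ≠ 0) :
    ∃ y : Fin 3 → PowerSeries F, y ≠ 0 ∧ ∑ i, v i * y i ^ 2 = 0 := by
  have h2 : (2 : F) ≠ 0 := Ring.two_ne_zero fun h ↦
    Nat.not_even_iff_odd.mpr hF (Nat.even_iff.mpr (FiniteField.even_card_of_char_two h))
  obtain ⟨l₀, l₁, hl⟩ := FiniteField.exists_mul_sq_add_mul_sq_add_eq_zero hF (hv 0) (hv 1)
    (constantCoeff (v 2))
  set w := v 0 * C l₀ ^ 2 + v 1 * C l₁ ^ 2 with hw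
  have hw₀ : constantCoeff w = -constantCoeff (v 2) := by
    simp only [hw, map_add, map_mul, map_pow, constantCoeff_C]
    linear_combination hl
  obtain ⟨g, hg⟩ := exists_mul_sq_add_eq_zero h2 (hv 2) one_ne_zero
    (by rw [hw₀]; ring : constantCoeff (v 2) * 1 ^ 2 + constantCoeff w = 0)
  refine ⟨![C l₀, C l₁, g], fun h ↦ hv 2 ?_, ?_⟩
  · have hg₀ : g = 0 := congrFun h 2
    rw [hg₀, zero_pow two_ne_zero, mul_zero, zero_add] at hg
    rw [← neg_eq_zero, ← hw₀, hg, map_zero]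
  · simp only [Fin.sum_univ_three, Matrix.cons_val_zero, Matrix.cons_val_one,
      Matrix.cons_val_two, Matrix.head_cons, Matrix.tail_cons]
    linear_combination hg

end PowerSeries

namespace HahnSeries

variable {R : Type*} [CommRing R]

theorem ofPowerSeries_coe_polynomial (p : R[X]) :
    ofPowerSeries ℤ R (p : PowerSeries R) = aeval (single (1 : ℤ) (1 : R)) p := by
  show ((ofPowerSeries ℤ R).comp coeToPowerSeries.ringHom) p = (aeval _).toRingHom p
  congr 1
  refine ringHom_ext (fun r => ?_) ?_ <;> simp [coeToPowerSeries.ringHom, algebraMap_apply']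

theorem aeval_single_neg_one (p : R[X]) :
    aeval (single (-1 : ℤ) (1 : R)) p
      = single (-(p.natDegree : ℤ)) 1 * ofPowerSeries ℤ R (p.reverse : PowerSeries R) := by
  have h1 : single (-1 : ℤ) (1 : R) * single 1 1 = 1 := by simp [single_mul_single]
  let _ : Invertible (single (-1 : ℤ) (1 : R)) := ⟨single 1 1, by rwa [mul_comm], h1⟩
  rw [ofPowerSeries_coe_polynomial, aeval_def, aeval_def, ← eval₂_reverse_mul_pow, mul_comm]
  congr 1
  simp [single_pow]

theorem aeval_single_neg_one_mul_sq (p : R[X]) (y : PowerSeries R) :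
    aeval (single (-1 : ℤ) (1 : R)) p
        * (ofPowerSeries ℤ R y * single ((p.natDegree / 2 : ℕ) : ℤ) (1 : R)) ^ 2
      = single (-(p.natDegree % 2 : ℕ) : ℤ) 1 * ofPowerSeries ℤ R (p.reverse * y ^ 2) := by
  have hexp : single (-(p.natDegree : ℤ)) (1 : R) * single ((p.natDegree / 2 : ℕ) : ℤ) 1 ^ 2
      = single (-(p.natDegree % 2 : ℕ) : ℤ) 1 := by
    rw [single_pow, single_mul_single, one_pow, mul_one, nsmul_eq_mul]
    congr 2
    omega
  rw [aeval_single_neg_one, map_mul, map_pow, ← hexp]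
  ring

end HahnSeries

/-- If the degrees of nonzero `a₁, a₂, a₃ ∈ 𝔽_q[t]` (`q` odd) all have the same
parity, then `a₁x₁² + a₂x₂² + a₃x₃² = 0` has a nontrivial solution in `𝔽_q((1/t))`, the
Laurent series field at infinity (where `t` is the inverse of the uniformizer `X`). -/
theorem stmt2 (Fq : Type) [Field Fq] [Fintype Fq] (hq : Odd (Fintype.card Fq))
    (a : Fin 3 → Polynomial Fq) (ha : ∀ i, a i ≠ 0)
    (hpar : ∀ i j, (a i).natDegree % 2 = (a j).natDegree % 2) :
    ∃ x : Fin 3 → LaurentSeries Fq, x ≠ 0 ∧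
      ∑ i, Polynomial.aeval ((HahnSeries.single (-1 : ℤ) (1 : Fq)) : LaurentSeries Fq) (a i)
        * x i ^ 2 = 0 := by
  obtain ⟨y, hy, hsum⟩ := PowerSeries.exists_ne_zero_sum_mul_sq_eq_zero hq
    (fun i ↦ ((a i).reverse : PowerSeries Fq)) (fun i ↦ by simpa using ha i)
  refine ⟨fun i ↦ HahnSeries.ofPowerSeries ℤ Fq (y i)
    * HahnSeries.single (((a i).natDegree / 2 : ℕ) : ℤ) 1, ?_, ?_⟩
  · obtain ⟨i, hi⟩ := Function.ne_iff.mp hy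
    refine Function.ne_iff.mpr ⟨i, mul_ne_zero ?_ (HahnSeries.single_ne_zero one_ne_zero)⟩
    exact (map_ne_zero_iff _ HahnSeries.ofPowerSeries_injective).mpr hi
  · simp_rw [HahnSeries.aeval_single_neg_one_mul_sq, hpar _ 0, ← Finset.mul_sum, ← map_sum,
      hsum, map_zero, mul_zero]
end

section
/- Let K be a field with a primitive n-th root of unity ε, and let a, a', b ∈ K*. Then the tensor product of symbol algebras (a,b;K,ε) ⊗_K (a',b;K,ε) is Brauer equivalent to (a·a', b; K, ε). -/
set_option synthInstance.maxHeartbeats 1000000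
set_option maxHeartbeats 1000000

open scoped TensorProduct

/-- The defining relations of the symbol algebra `(a,b;K,ε)`: generators `u = ι 0`, `v = ι 1`
with `uⁿ = a`, `vⁿ = b`, `uv = ε·vu`. -/
def SymbolRel (K : Type) [Field K] (n : ℕ) (ε a b : K) :
    FreeAlgebra K (Fin 2) → FreeAlgebra K (Fin 2) → Prop := fun p q =>
  (p = (FreeAlgebra.ι K (0 : Fin 2)) ^ n ∧ q = algebraMap K _ a) ∨
  (p = (FreeAlgebra.ι K (1 : Fin 2)) ^ n ∧ q = algebraMap K _ b) ∨
  (p = FreeAlgebra.ι K (0 : Fin 2) * FreeAlgebra.ι K (1 : Fin 2) ∧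
    q = algebraMap K _ ε * (FreeAlgebra.ι K (1 : Fin 2) * FreeAlgebra.ι K (0 : Fin 2)))

/-- The symbol algebra `(a,b;K,ε)`. -/
noncomputable def SymbolAlgebra (K : Type) [Field K] (n : ℕ) (ε a b : K) : Type :=
  RingQuot (SymbolRel K n ε a b)

noncomputable instance (K : Type) [Field K] (n : ℕ) (ε a b : K) :
    Ring (SymbolAlgebra K n ε a b) := by unfold SymbolAlgebra; infer_instance

noncomputable instance (K : Type) [Field K] (n : ℕ) (ε a b : K) :
    Algebra K (SymbolAlgebra K n ε a b) := by unfold SymbolAlgebra; infer_instance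

/-!
Write `A = (a,b)` and `A' = (a',b)` with generators `u, v` and `u', v'`. In `A ⊗ A'` the pair
`(u ⊗ u', v ⊗ 1)` satisfies the relations of `(aa',b)`, the pair `(1 ⊗ u', v⁻¹ ⊗ v')` those of
`(a',1)`, and the two pairs commute; this gives `(aa',b) ⊗ (a',1) → A ⊗ A'`. Its image contains
`u ⊗ 1`, `v ⊗ 1`, `1 ⊗ u'`, `1 ⊗ v'`, so it is onto, hence bijective as both sides have dimension `n⁴`.
Finally `(a',1) ≅ Mₙ(K)`: `u` acts on `Kⁿ` as a cyclic shift twisted by `a'` and `v` as `diag(εⁱ)`,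
and the action is faithful because the Vandermonde matrix of the distinct powers of `ε` is
invertible. Hence `A ⊗ A' ≅ Mₙ((aa',b))`.

A symbol algebra has dimension `n²`: the monomials `uⁱvʲ` span it, and they are independent because
they act independently on `e₀ ∈ Rⁿ`, where `R = K[X]/(Xⁿ - b)` contains an `n`-th root of `b`.
-/

section Algebra

variable {K A : Type*} [Field K] [Ring A] [Algebra K A]

theorem pow_mul_pow_eq_smul_of_mul_eq_smul {x y : A} {c : K} (h : x * y = c • (y * x))
    (i j : ℕ) : x ^ i * y ^ j = c ^ (i * j) • (y ^ j * x ^ i) := by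
  have hx : ∀ j : ℕ, x * y ^ j = c ^ j • (y ^ j * x) := by
    intro j
    induction j with
    | zero => simp
    | succ j ih =>
      rw [pow_succ, ← mul_assoc, ih, smul_mul_assoc, mul_assoc, h, mul_smul_comm, smul_smul,
        ← mul_assoc, ← pow_succ, ← pow_succ]
  induction i with
  | zero => simp
  | succ i ih =>
    rw [pow_succ, mul_assoc, hx, mul_smul_comm, ← mul_assoc, ih, smul_mul_assoc, smul_smul,
      mul_assoc, ← pow_succ, ← pow_add, Nat.succ_mul, add_comm]

theorem pow_eq_smul_pow_mod {n : ℕ} {x : A} {c : K} (h : x ^ n = algebraMap K A c) (m : ℕ) :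
    x ^ m = c ^ (m / n) • x ^ (m % n) := by
  conv_lhs => rw [← Nat.div_add_mod m n, pow_add, pow_mul, h, ← map_pow, ← Algebra.smul_def]

theorem Algebra.TensorProduct.algebraMap_tmul_algebraMap {B : Type*} [Ring B] [Algebra K B]
    (x y : K) : algebraMap K A x ⊗ₜ[K] algebraMap K B y = algebraMap K (A ⊗[K] B) (x * y) := by
  rw [Algebra.algebraMap_eq_smul_one, Algebra.algebraMap_eq_smul_one, TensorProduct.smul_tmul_smul,
    ← Algebra.TensorProduct.one_def, ← Algebra.algebraMap_eq_smul_one]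

noncomputable def Matrix.finOneAlgEquiv : Matrix (Fin 1) (Fin 1) A ≃ₐ[K] A :=
  AlgEquiv.ofRingEquiv (f := Matrix.uniqueRingEquiv) fun c =>
    show algebraMap K (Matrix (Fin 1) (Fin 1) A) c 0 0 = _ from
      Matrix.algebraMap_matrix_apply.trans (if_pos rfl)

theorem IsPrimitiveRoot.eq_zero_of_forall_sum_mul_pow_eq_zero {n : ℕ} {ε : K}
    (hε : IsPrimitiveRoot ε n) {c : Fin n → K}
    (h : ∀ q : Fin n, ∑ j : Fin n, c j * ε ^ ((q : ℕ) * j) = 0) : c = 0 := by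
  refine Matrix.eq_zero_of_mulVec_eq_zero
    (Matrix.det_vandermonde_ne_zero_iff.mpr fun i j hij => Fin.ext (hε.pow_inj i.isLt j.isLt hij))
    (funext fun q => ?_)
  simpa [Matrix.mulVec, dotProduct, Matrix.vandermonde, ← pow_mul, mul_comm] using h q

end Algebra

namespace SymbolAlgebra

/- Once the instances of `SymbolAlgebra` are unfolded to those of `RingQuot`, instance search can no
longer identify the `Module K` structure coming from `Algebra` with the additive group coming from
`Ring`. Re-exporting both through definitions that are not unfolded avoids this. -/
noncomputable def instRing (K : Type) [Field K] (n : ℕ) (ε a b : K) : Ring (SymbolAlgebra K n ε a b) :=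
  instRingSymbolAlgebra K n ε a b

noncomputable def instAlgebra (K : Type) [Field K] (n : ℕ) (ε a b : K) :
    @Algebra K (SymbolAlgebra K n ε a b) _ (@Ring.toSemiring _ (instRing K n ε a b)) :=
  instAlgebraSymbolAlgebra K n ε a b

attribute [local instance] instRing instAlgebra

variable {K : Type} [Field K] {n : ℕ} {ε a b : K}

noncomputable def u (K : Type) [Field K] (n : ℕ) (ε a b : K) : SymbolAlgebra K n ε a b :=
  RingQuot.mkAlgHom K (SymbolRel K n ε a b) (FreeAlgebra.ι K 0)

noncomputable def v (K : Type) [Field K] (n : ℕ) (ε a b : K) : SymbolAlgebra K n ε a b :=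
  RingQuot.mkAlgHom K (SymbolRel K n ε a b) (FreeAlgebra.ι K 1)

theorem u_pow : u K n ε a b ^ n = algebraMap K _ a := by
  have h := RingQuot.mkAlgHom_rel K (s := SymbolRel K n ε a b) (Or.inl ⟨rfl, rfl⟩)
  rw [map_pow, AlgHom.commutes] at h
  exact h

theorem v_pow : v K n ε a b ^ n = algebraMap K _ b := by
  have h := RingQuot.mkAlgHom_rel K (s := SymbolRel K n ε a b) (Or.inr (Or.inl ⟨rfl, rfl⟩))
  rw [map_pow, AlgHom.commutes] at h
  exact h

theorem u_mul_v : u K n ε a b * v K n ε a b = ε • (v K n ε a b * u K n ε a b) := by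
  have h := RingQuot.mkAlgHom_rel K (s := SymbolRel K n ε a b) (Or.inr (Or.inr ⟨rfl, rfl⟩))
  rw [map_mul, map_mul, map_mul, AlgHom.commutes] at h
  rw [Algebra.smul_def]
  exact h

section lift

variable {B : Type*} [Ring B] [Algebra K B] (U V : B) (hU : U ^ n = algebraMap K B a)
  (hV : V ^ n = algebraMap K B b) (hUV : U * V = ε • (V * U))
include hU hV hUV

noncomputable def lift : SymbolAlgebra K n ε a b →ₐ[K] B :=
  RingQuot.liftAlgHom K ⟨FreeAlgebra.lift K ![U, V], by
    rintro x y (⟨rfl, rfl⟩ | ⟨rfl, rfl⟩ | ⟨rfl, rfl⟩) <;> simp [hU, hV, hUV, Algebra.smul_def]⟩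

@[simp] theorem lift_u : lift U V hU hV hUV (u K n ε a b) = U :=
  (RingQuot.liftAlgHom_mkAlgHom_apply K _ _ _).trans (FreeAlgebra.lift_ι_apply _ _)

@[simp] theorem lift_v : lift U V hU hV hUV (v K n ε a b) = V :=
  (RingQuot.liftAlgHom_mkAlgHom_apply K _ _ _).trans (FreeAlgebra.lift_ι_apply _ _)

end lift

@[elab_as_elim]
theorem induction_on {p : SymbolAlgebra K n ε a b → Prop}
    (algebraMap : ∀ c : K, p (algebraMap K _ c)) (u : p (u K n ε a b)) (v : p (v K n ε a b))
    (mul : ∀ x y, p x → p y → p (x * y)) (add : ∀ x y, p x → p y → p (x + y))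
    (x : SymbolAlgebra K n ε a b) : p x := by
  obtain ⟨x, rfl⟩ := RingQuot.mkAlgHom_surjective K (SymbolRel K n ε a b) x
  induction x with
  | grade0 c => rw [AlgHom.commutes]; exact algebraMap c
  | grade1 i => fin_cases i; exacts [u, v]
  | mul x y hx hy => rw [map_mul]; exact mul _ _ hx hy
  | add x y hx hy => rw [map_add]; exact add _ _ hx hy

noncomputable def monomial (K : Type) [Field K] (n : ℕ) (ε a b : K) (p : Fin n × Fin n) :
    SymbolAlgebra K n ε a b :=
  u K n ε a b ^ (p.1 : ℕ) * v K n ε a b ^ (p.2 : ℕ)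

theorem pow_mul_pow_mem_span_monomial [NeZero n] (i j : ℕ) :
    u K n ε a b ^ i * v K n ε a b ^ j ∈ Submodule.span K (Set.range (monomial K n ε a b)) := by
  rw [pow_eq_smul_pow_mod u_pow i, pow_eq_smul_pow_mod v_pow j, smul_mul_smul_comm]
  exact Submodule.smul_mem _ _ <| Submodule.subset_span
    ⟨(⟨i % n, Nat.mod_lt _ (NeZero.pos n)⟩, ⟨j % n, Nat.mod_lt _ (NeZero.pos n)⟩), rfl⟩

theorem span_monomial [NeZero n] (hε : ε ≠ 0) :
    Submodule.span K (Set.range (monomial K n ε a b)) = ⊤ := by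
  set S := Submodule.span K (Set.range (monomial K n ε a b))
  have mul_mem_of_monomial (x : SymbolAlgebra K n ε a b) (hx : ∀ p, x * monomial K n ε a b p ∈ S) :
      ∀ y ∈ S, x * y ∈ S := fun _ hy =>
    (Submodule.span_le (p := S.comap (LinearMap.mulLeft K (A := SymbolAlgebra K n ε a b) x))).mpr
      (by rintro _ ⟨p, rfl⟩; exact hx p) hy
  have mul_mem : ∀ x : SymbolAlgebra K n ε a b, ∀ y ∈ S, x * y ∈ S := by
    intro x
    induction x using induction_on with
    | algebraMap c => exact fun y hy => (Algebra.smul_def c y) ▸ S.smul_mem c hy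
    | u =>
      refine mul_mem_of_monomial _ fun ⟨i, j⟩ => ?_
      simpa [monomial, ← mul_assoc, ← pow_succ'] using pow_mul_pow_mem_span_monomial (i + 1) j
    | v =>
      refine mul_mem_of_monomial _ fun ⟨i, j⟩ => ?_
      have hvu : v K n ε a b * u K n ε a b ^ (i : ℕ) =
          (ε ^ (i : ℕ))⁻¹ • (u K n ε a b ^ (i : ℕ) * v K n ε a b) := by
        rw [← pow_one (v K n ε a b), pow_mul_pow_eq_smul_of_mul_eq_smul u_mul_v, smul_smul,
          mul_one, inv_mul_cancel₀ (pow_ne_zero _ hε), one_smul]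
      rw [monomial, ← mul_assoc, hvu, smul_mul_assoc, mul_assoc, ← pow_succ']
      exact S.smul_mem _ (pow_mul_pow_mem_span_monomial _ _)
    | mul x y hx hy => exact fun z hz => (mul_assoc x y z).symm ▸ hx _ (hy z hz)
    | add x y hx hy => exact fun z hz => (add_mul x y z).symm ▸ S.add_mem (hx z hz) (hy z hz)
  have one_mem : (1 : SymbolAlgebra K n ε a b) ∈ S := by
    simpa using pow_mul_pow_mem_span_monomial (ε := ε) (a := a) (b := b) 0 0
  exact eq_top_iff.mpr fun x _ => mul_one x ▸ mul_mem x 1 one_mem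

section Representation

open Fin.NatCast

variable (n) [NeZero n] (R : Type*) [CommRing R] [Algebra K R]

/-- The cyclic shift `f ↦ f (· + 1)`, multiplied by `a` exactly where the index wraps around. -/
noncomputable def twistedShift (a : K) : Module.End K (Fin n → R) where
  toFun f i := a ^ (((i : ℕ) + 1) / n) • f (i + 1)
  map_add' f g := funext fun i => smul_add _ (f (i + 1)) (g (i + 1))
  map_smul' c f := funext fun i => smul_comm _ c (f (i + 1))

noncomputable def twistedDiagonal (ε : K) (r : R) : Module.End K (Fin n → R) where
  toFun f i := ε ^ (i : ℕ) • (r * f i)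
  map_add' f g := funext fun i => by simp only [Pi.add_apply, mul_add, smul_add]
  map_smul' c f := funext fun i => by
    simp only [Pi.smul_apply, mul_smul_comm, RingHom.id_apply]; exact smul_comm _ c _

variable {n R}

omit [NeZero n] in
theorem twistedDiagonal_pow_apply (ε : K) (r : R) (k : ℕ) (f : Fin n → R) (i : Fin n) :
    (twistedDiagonal n R ε r ^ k) f i = ε ^ ((i : ℕ) * k) • (r ^ k * f i) := by
  induction k generalizing f with
  | zero => simp
  | succ k ih =>
    rw [pow_succ, Module.End.mul_apply, ih]
    simp only [twistedDiagonal, LinearMap.coe_mk, AddHom.coe_mk]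
    rw [mul_smul_comm, smul_smul, ← pow_add, ← mul_assoc, ← pow_succ, Nat.mul_succ]

omit [NeZero n] in
theorem twistedDiagonal_pow_self (hε : ε ^ n = 1) (r : R) (hr : r ^ n = algebraMap K R b) :
    twistedDiagonal n R ε r ^ n = algebraMap K (Module.End K (Fin n → R)) b := by
  refine LinearMap.ext fun f => funext fun i => ?_
  rw [twistedDiagonal_pow_apply, mul_comm, pow_mul, hε, one_pow, one_smul, hr,
    ← Algebra.smul_def]
  rfl

theorem twistedShift_pow_apply (a : K) (k : ℕ) (f : Fin n → R) (i : Fin n) :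
    (twistedShift n R a ^ k) f i = a ^ (((i : ℕ) + k) / n) • f (i + k) := by
  have carry (m : ℕ) : m / n + (m % n + 1) / n = (m + 1) / n := by
    rw [add_comm, ← Nat.add_mul_div_left _ _ (NeZero.pos n), add_right_comm, Nat.mod_add_div]
  induction k generalizing f with
  | zero => simp [Nat.div_eq_of_lt i.isLt]
  | succ k ih =>
    rw [pow_succ, Module.End.mul_apply, ih]
    simp only [twistedShift, LinearMap.coe_mk, AddHom.coe_mk, smul_smul, ← pow_add, Fin.val_add,
      Fin.val_natCast, Nat.add_mod_mod, carry, Nat.cast_succ, add_assoc]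

theorem twistedShift_pow_self (a : K) :
    twistedShift n R a ^ n = algebraMap K (Module.End K (Fin n → R)) a := by
  refine LinearMap.ext fun f => funext fun i => ?_
  rw [twistedShift_pow_apply, Nat.add_div_right _ (NeZero.pos n), Nat.div_eq_of_lt i.isLt,
    Fin.natCast_self, add_zero, zero_add, pow_one]
  rfl

theorem twistedShift_mul_twistedDiagonal (hε : ε ^ n = 1) (a : K) (r : R) :
    twistedShift n R a * twistedDiagonal n R ε r =
      ε • (twistedDiagonal n R ε r * twistedShift n R a) := by
  refine LinearMap.ext fun f => funext fun i => ?_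
  simp only [Module.End.mul_apply, LinearMap.smul_apply, Pi.smul_apply, twistedShift,
    twistedDiagonal, LinearMap.coe_mk, AddHom.coe_mk, mul_smul_comm, smul_smul]
  rw [Fin.val_add, Fin.val_one', Nat.add_mod_mod, ← pow_eq_pow_mod _ hε]
  ring_nf

end Representation

section Basis

open Fin.NatCast Polynomial

variable [NeZero n] {R : Type*} [CommRing R] [Algebra K R]

noncomputable def toEnd (hε : ε ^ n = 1) (r : R) (hr : r ^ n = algebraMap K R b) :
    SymbolAlgebra K n ε a b →ₐ[K] Module.End K (Fin n → R) :=
  lift (twistedShift n R a) (twistedDiagonal n R ε r) (twistedShift_pow_self a)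
    (twistedDiagonal_pow_self hε r hr) (twistedShift_mul_twistedDiagonal hε a r)

theorem toEnd_monomial_single (hε : ε ^ n = 1) (r : R) (hr : r ^ n = algebraMap K R b)
    (p : Fin n × Fin n) (q : Fin n) :
    toEnd hε r hr (monomial K n ε a b p) (Pi.single q 1) =
      Pi.single (q - p.1)
        ((a ^ ((((q - p.1 : Fin n) : ℕ) + p.1) / n) * ε ^ ((q : ℕ) * p.2)) • r ^ (p.2 : ℕ)) := by
  refine funext fun t => ?_
  simp only [toEnd, monomial, map_mul, map_pow, lift_u, lift_v, Module.End.mul_apply,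
    twistedShift_pow_apply, Fin.cast_val_eq_self]
  by_cases ht : t = q - p.1
  · subst ht
    simp [twistedDiagonal_pow_apply, mul_smul]
  · have : t + p.1 ≠ q := fun h => ht (eq_sub_of_add_eq h)
    simp [twistedDiagonal_pow_apply, ht, this]

theorem linearIndependent_monomial (hε : ε ^ n = 1) (ha : a ≠ 0) :
    LinearIndependent K (monomial K n ε a b) := by
  have hmonic : (X ^ n - C b : K[X]).Monic := monic_X_pow_sub_C b (NeZero.ne n)
  set r := AdjoinRoot.root (X ^ n - C b : K[X])
  have hr : r ^ n = algebraMap K _ b := by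
    have := AdjoinRoot.eval₂_root (X ^ n - C b : K[X])
    rwa [eval₂_sub, eval₂_X_pow, eval₂_C, sub_eq_zero] at this
  let basisR : Module.Basis (Fin n) K (AdjoinRoot (X ^ n - C b : K[X])) :=
    (AdjoinRoot.powerBasis' hmonic).basis.reindex
      (finCongr (by rw [AdjoinRoot.powerBasis'_dim, natDegree_X_pow_sub_C]))
  have hsingle : LinearIndependent K
      (fun p : Fin n × Fin n => (Pi.single (-p.1) (r ^ (p.2 : ℕ)) : Fin n → _)) := by
    have := (Pi.basis fun _ : Fin n => basisR).linearIndependent.comp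
      (fun p : Fin n × Fin n => (⟨-p.1, p.2⟩ : (_ : Fin n) × Fin n))
      (fun p q h => by simp_all [Prod.ext_iff])
    simpa [basisR, Function.comp_def, Pi.basis_apply] using this
  let scale (p : Fin n × Fin n) : Kˣ := Units.mk0 _ (pow_ne_zero
    ((((-p.1 : Fin n) : ℕ) + p.1) / n) ha)
  refine LinearIndependent.of_comp
    ((LinearMap.applyₗ (Pi.single 0 1)).comp (toEnd hε r hr).toLinearMap) ?_
  convert hsingle.units_smul scale using 1
  ext p : 1
  simp [toEnd_monomial_single, scale, Pi.single_smul]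

noncomputable def basisMonomial (hε : ε ^ n = 1) (ha : a ≠ 0) :
    Module.Basis (Fin n × Fin n) K (SymbolAlgebra K n ε a b) :=
  Module.Basis.mk (linearIndependent_monomial hε ha)
    (span_monomial (fun h => by simp [h, NeZero.ne n] at hε)).ge

theorem finiteDimensional (hε : ε ^ n = 1) (ha : a ≠ 0) :
    FiniteDimensional K (SymbolAlgebra K n ε a b) :=
  (basisMonomial hε ha).finiteDimensional_of_finite

theorem finrank_eq (hε : ε ^ n = 1) (ha : a ≠ 0) :
    Module.finrank K (SymbolAlgebra K n ε a b) = n * n := by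
  simp [Module.finrank_eq_card_basis (basisMonomial hε ha)]

end Basis

section Split

variable [NeZero n]

theorem toEnd_injective (hε : IsPrimitiveRoot ε n) (ha : a ≠ 0) :
    Function.Injective (toEnd (a := a) (b := 1) hε.pow_eq_one (1 : K) (by simp)) := by
  rw [injective_iff_map_eq_zero]
  intro x hx
  let B := basisMonomial (b := 1) hε.pow_eq_one ha
  have hB : ∀ p, B p = monomial K n ε a 1 p := fun p => Module.Basis.mk_apply _ _ _
  suffices ∀ i j, B.repr x (i, j) = 0 by
    rw [← B.sum_repr x]
    simp [this]
  intro i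
  refine congrFun (hε.eq_zero_of_forall_sum_mul_pow_eq_zero fun q => ?_)
  have hq := congrFun (congrArg (fun T => T (Pi.single q 1)) hx) (q - i)
  rw [← B.sum_repr x] at hq
  simp only [hB, Fintype.sum_prod_type, map_sum, map_smul, LinearMap.coe_sum, LinearMap.coe_smul,
    Finset.sum_apply, Pi.smul_apply, toEnd_monomial_single, one_pow, smul_eq_mul, mul_one,
    Pi.single_apply, sub_right_inj, mul_ite, mul_zero, Finset.sum_ite_irrel, Finset.sum_const_zero,
    Finset.sum_ite_eq, Finset.mem_univ, ↓reduceIte, LinearMap.zero_apply, Pi.zero_apply] at hq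
  simp_rw [mul_left_comm _ (a ^ _), ← Finset.mul_sum] at hq
  exact (mul_eq_zero.mp hq).resolve_left (pow_ne_zero _ ha)

noncomputable def algEquivMatrix (hε : IsPrimitiveRoot ε n) (ha : a ≠ 0) :
    SymbolAlgebra K n ε a 1 ≃ₐ[K] Matrix (Fin n) (Fin n) K :=
  haveI := finiteDimensional (b := 1) hε.pow_eq_one ha
  have hrank : Module.finrank K (SymbolAlgebra K n ε a 1) =
      Module.finrank K (Module.End K (Fin n → K)) := by
    rw [finrank_eq hε.pow_eq_one ha, Module.finrank_linearMap, Module.finrank_fin_fun]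
  (AlgEquiv.ofBijective _ ⟨toEnd_injective hε ha,
    (LinearMap.injective_iff_surjective_of_finrank_eq_finrank hrank
      (f := (toEnd _ _ _).toLinearMap)).mp (toEnd_injective hε ha)⟩).trans algEquivMatrix'

end Split

theorem algHom_apply_mem {B : Type*} [Ring B] [Algebra K B] {S : Subalgebra K B}
    (f : SymbolAlgebra K n ε a b →ₐ[K] B) (hu : f (u K n ε a b) ∈ S) (hv : f (v K n ε a b) ∈ S)
    (x : SymbolAlgebra K n ε a b) : f x ∈ S := by
  induction x using induction_on with
  | algebraMap c => exact f.commutes c ▸ S.algebraMap_mem c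
  | u => exact hu
  | v => exact hv
  | mul x y hx hy => exact (map_mul f x y).symm ▸ S.mul_mem hx hy
  | add x y hx hy => exact (map_add f x y).symm ▸ S.add_mem hx hy

theorem commute_algHom_apply {B : Type*} [Ring B] [Algebra K B] (f : SymbolAlgebra K n ε a b →ₐ[K] B)
    {z : B} (hu : Commute (f (u K n ε a b)) z) (hv : Commute (f (v K n ε a b)) z)
    (x : SymbolAlgebra K n ε a b) : Commute (f x) z :=
  Subalgebra.mem_centralizer_iff K |>.mp
    (algHom_apply_mem (S := Subalgebra.centralizer K {z}) f
      (by simpa [Subalgebra.mem_centralizer_iff] using hu.eq.symm)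
      (by simpa [Subalgebra.mem_centralizer_iff] using hv.eq.symm) x) z rfl |>.symm

section TensorProduct

open Algebra.TensorProduct (tmul_pow tmul_mul_tmul)

variable {a' : K}

noncomputable def toTensorOfMul :
    SymbolAlgebra K n ε (a * a') b →ₐ[K] SymbolAlgebra K n ε a b ⊗[K] SymbolAlgebra K n ε a' b :=
  lift (u K n ε a b ⊗ₜ u K n ε a' b) (v K n ε a b ⊗ₜ 1)
    (by rw [tmul_pow, u_pow, u_pow, Algebra.TensorProduct.algebraMap_tmul_algebraMap, map_mul])
    (by rw [tmul_pow, v_pow, one_pow, Algebra.TensorProduct.algebraMap_apply])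
    (by rw [tmul_mul_tmul, tmul_mul_tmul, u_mul_v, mul_one, one_mul, TensorProduct.smul_tmul'])

theorem inv_smul_v_pow_pred_pow [NeZero n] (hb : b ≠ 0) :
    (b⁻¹ • v K n ε a b ^ (n - 1)) ^ n = algebraMap K _ b⁻¹ := by
  have hscalar : b⁻¹ ^ n * b ^ (n - 1) = b⁻¹ := by
    obtain ⟨m, rfl⟩ := Nat.exists_eq_succ_of_ne_zero (NeZero.ne n)
    rw [pow_succ, Nat.succ_sub_one, mul_right_comm, ← mul_pow, inv_mul_cancel₀ hb, one_pow,
      one_mul]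
  rw [smul_pow, ← pow_mul, pow_mul', v_pow, ← map_pow, Algebra.smul_def, ← map_mul, hscalar]

-- `b⁻¹ • vⁿ⁻¹` is the inverse of `v`.
noncomputable def toTensorOfOne [NeZero n] (hb : b ≠ 0) :
    SymbolAlgebra K n ε a' 1 →ₐ[K] SymbolAlgebra K n ε a b ⊗[K] SymbolAlgebra K n ε a' b :=
  lift (1 ⊗ₜ u K n ε a' b) ((b⁻¹ • v K n ε a b ^ (n - 1)) ⊗ₜ v K n ε a' b)
    (by rw [tmul_pow, u_pow, one_pow, Algebra.TensorProduct.algebraMap_apply'])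
    (by rw [tmul_pow, inv_smul_v_pow_pred_pow hb, v_pow,
      Algebra.TensorProduct.algebraMap_tmul_algebraMap, inv_mul_cancel₀ hb])
    (by rw [tmul_mul_tmul, tmul_mul_tmul, u_mul_v, mul_one, one_mul, TensorProduct.tmul_smul])

theorem commute_toTensorOfMul_toTensorOfOne [NeZero n] (hε : ε ^ n = 1) (hb : b ≠ 0)
    (x : SymbolAlgebra K n ε (a * a') b) (y : SymbolAlgebra K n ε a' 1) :
    Commute (toTensorOfMul x) (toTensorOfOne hb y) := by
  have hV : ε • (u K n ε a b * (b⁻¹ • v K n ε a b ^ (n - 1))) =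
      b⁻¹ • v K n ε a b ^ (n - 1) * u K n ε a b := by
    have := pow_mul_pow_eq_smul_of_mul_eq_smul (u_mul_v (K := K) (n := n) (ε := ε) (a := a)
      (b := b)) 1 (n - 1)
    simp only [pow_one, one_mul] at this
    rw [mul_smul_comm, this, smul_smul, smul_smul, mul_right_comm, ← pow_succ',
      Nat.sub_add_cancel NeZero.one_le, hε, one_mul, smul_mul_assoc]
  refine commute_algHom_apply _ (commute_algHom_apply _ ?_ ?_ y).symm
    (commute_algHom_apply _ ?_ ?_ y).symm x <;>
  simp only [toTensorOfMul, toTensorOfOne, lift_u, lift_v, Commute, SemiconjBy, tmul_mul_tmul,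
    one_mul, mul_one]
  · rw [← hV, u_mul_v, TensorProduct.smul_tmul]
  · rw [smul_mul_assoc, mul_smul_comm, ← pow_succ, ← pow_succ']

noncomputable def toTensor [NeZero n] (hε : ε ^ n = 1) (hb : b ≠ 0) :
    SymbolAlgebra K n ε (a * a') b ⊗[K] SymbolAlgebra K n ε a' 1 →ₐ[K]
      SymbolAlgebra K n ε a b ⊗[K] SymbolAlgebra K n ε a' b :=
  Algebra.TensorProduct.lift toTensorOfMul (toTensorOfOne hb)
    (commute_toTensorOfMul_toTensorOfOne hε hb)

theorem toTensor_surjective [NeZero n] (hε : ε ^ n = 1) (ha' : a' ≠ 0) (hb : b ≠ 0) :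
    Function.Surjective (toTensor (a := a) (a' := a') hε hb) := by
  set S := (toTensor (a := a) (a' := a') hε hb).range
  have hL : ∀ x, toTensorOfMul x ∈ S := fun x => ⟨x ⊗ₜ 1, by simp [toTensor]⟩
  have hR : ∀ y, toTensorOfOne hb y ∈ S := fun y => ⟨1 ⊗ₜ y, by simp [toTensor]⟩
  have hu : u K n ε a b ⊗ₜ[K] (1 : SymbolAlgebra K n ε a' b) =
      a'⁻¹ • (toTensorOfMul (u K n ε (a * a') b) * toTensorOfOne hb (u K n ε a' 1) ^ (n - 1)) := by
    simp only [toTensorOfMul, toTensorOfOne, lift_u, tmul_pow, one_pow, tmul_mul_tmul, mul_one]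
    rw [← pow_succ', Nat.sub_add_cancel NeZero.one_le, u_pow, Algebra.algebraMap_eq_smul_one,
      TensorProduct.tmul_smul, smul_smul, inv_mul_cancel₀ ha', one_smul]
  have hv : (1 : SymbolAlgebra K n ε a b) ⊗ₜ[K] v K n ε a' b =
      toTensorOfMul (v K n ε (a * a') b) * toTensorOfOne hb (v K n ε a' 1) := by
    simp only [toTensorOfMul, toTensorOfOne, lift_v, tmul_mul_tmul, one_mul]
    rw [mul_smul_comm, ← pow_succ', Nat.sub_add_cancel NeZero.one_le, v_pow, Algebra.smul_def,
      ← map_mul, inv_mul_cancel₀ hb, map_one]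
  have hleft (x : SymbolAlgebra K n ε a b) : x ⊗ₜ[K] (1 : SymbolAlgebra K n ε a' b) ∈ S :=
    algHom_apply_mem (S := S) Algebra.TensorProduct.includeLeft
      (by
        rw [Algebra.TensorProduct.includeLeft_apply, hu]
        exact S.smul_mem (S.mul_mem (hL _) (S.pow_mem (hR _) _)) _)
      (by simpa [toTensorOfMul] using hL (v K n ε (a * a') b)) x
  have hright (y : SymbolAlgebra K n ε a' b) : (1 : SymbolAlgebra K n ε a b) ⊗ₜ[K] y ∈ S :=
    algHom_apply_mem (S := S) (Algebra.TensorProduct.includeRight (A := SymbolAlgebra K n ε a b))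
      (by simpa [toTensorOfOne] using hR (u K n ε a' 1))
      (by
        rw [Algebra.TensorProduct.includeRight_apply, hv]
        exact S.mul_mem (hL _) (hR _)) y
  rw [← AlgHom.range_eq_top, eq_top_iff, ← Algebra.TensorProduct.adjoin_tmul_eq_top,
    Algebra.adjoin_le_iff]
  rintro _ ⟨x, y, rfl⟩
  have := S.mul_mem (hleft x) (hright y)
  rwa [tmul_mul_tmul, mul_one, one_mul] at this

noncomputable def tensorEquiv [NeZero n] (hε : ε ^ n = 1) (ha : a ≠ 0) (ha' : a' ≠ 0)
    (hb : b ≠ 0) :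
    SymbolAlgebra K n ε (a * a') b ⊗[K] SymbolAlgebra K n ε a' 1 ≃ₐ[K]
      SymbolAlgebra K n ε a b ⊗[K] SymbolAlgebra K n ε a' b :=
  haveI := finiteDimensional (b := b) hε (mul_ne_zero ha ha')
  haveI := finiteDimensional (b := 1) hε ha'
  haveI := finiteDimensional (b := b) hε ha
  haveI := finiteDimensional (b := b) hε ha'
  have hrank : Module.finrank K (SymbolAlgebra K n ε (a * a') b ⊗[K] SymbolAlgebra K n ε a' 1) =
      Module.finrank K (SymbolAlgebra K n ε a b ⊗[K] SymbolAlgebra K n ε a' b) := by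
    simp only [Module.finrank_tensorProduct, finrank_eq hε, ha, ha', mul_ne_zero, ne_eq,
      not_false_eq_true]
  AlgEquiv.ofBijective (toTensor hε hb)
    ⟨(LinearMap.injective_iff_surjective_of_finrank_eq_finrank hrank
      (f := (toTensor hε hb).toLinearMap)).mpr (toTensor_surjective hε ha' hb),
      toTensor_surjective hε ha' hb⟩

end TensorProduct

theorem nonempty_matrix_tensor_algEquiv {a' : K} [NeZero n] (hε : IsPrimitiveRoot ε n)
    (ha : a ≠ 0) (ha' : a' ≠ 0) (hb : b ≠ 0) :
    Nonempty (Matrix (Fin 1) (Fin 1) (SymbolAlgebra K n ε a b ⊗[K] SymbolAlgebra K n ε a' b) ≃ₐ[K]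
      Matrix (Fin n) (Fin n) (SymbolAlgebra K n ε (a * a') b)) :=
  ⟨Matrix.finOneAlgEquiv.trans <| (tensorEquiv hε.pow_eq_one ha ha' hb).symm.trans <|
    (Algebra.TensorProduct.congr AlgEquiv.refl (algEquivMatrix hε ha')).trans
      (matrixEquivTensor _ _ _).symm⟩

end SymbolAlgebra

open scoped TensorProduct in
/-- `(a,b;K,ε) ⊗_K (a',b;K,ε)` is Brauer equivalent to `(a·a',b;K,ε)`:
some matrix algebras over them are isomorphic. -/
theorem stmt7 (K : Type) [Field K] (n : ℕ) (hn : 0 < n) (ε : K)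
    (hε : IsPrimitiveRoot ε n) (a a' b : K) (ha : a ≠ 0) (ha' : a' ≠ 0) (hb : b ≠ 0) :
    ∃ r s : ℕ, 0 < r ∧ 0 < s ∧
      Nonempty ((Matrix (Fin r) (Fin r)
          (SymbolAlgebra K n ε a b ⊗[K] SymbolAlgebra K n ε a' b))
        ≃ₐ[K] Matrix (Fin s) (Fin s) (SymbolAlgebra K n ε (a * a') b)) := by
  have : NeZero n := ⟨hn.ne'⟩
  exact ⟨1, n, one_pos, hn, SymbolAlgebra.nonempty_matrix_tensor_algEquiv hε ha ha' hb⟩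
end

section
/- Let K be a field, σ an automorphism of K of order n, λ ∈ (K^σ)*, and suppose λ = N_{K/K^σ}(a) for some a ∈ K*, where N denotes the field norm. Define N_j(a) = a·σ(a)···σ^{j−1}(a) (with N₀(a)=1). Then the map θ: K[x;σ]/(xⁿ−λ) → K[y;σ]/(yⁿ−1) given by θ(Σ_{i=0}^{n−1} a_i x^i) = Σ_{i=0}^{n−1} a_i N_i(a) y^i is an isomorphism of K^σ-algebras. -/
set_option synthInstance.maxHeartbeats 1000000
set_option maxHeartbeats 1000000

/-- The fixed subfield `K^σ` of an automorphism `σ` of a field `K`. -/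
def fixedSubfield {K : Type} [Field K] (σ : K ≃+* K) : Subfield K where
  carrier := {c | σ c = c}
  one_mem' := map_one σ
  mul_mem' := by intro a b ha hb; simp only [Set.mem_setOf_eq, map_mul] at *; rw [ha, hb]
  add_mem' := by intro a b ha hb; simp only [Set.mem_setOf_eq, map_add] at *; rw [ha, hb]
  zero_mem' := map_zero σ
  neg_mem' := by intro a ha; simp only [Set.mem_setOf_eq, map_neg] at *; rw [ha]
  inv_mem' := by intro a ha; simp only [Set.mem_setOf_eq, map_inv₀] at *; rw [ha]

/-!
With `N_k(a) = a σ(a) ⋯ σ^{k-1}(a)`, the cocycle identity `N_{k+m}(a) = N_k(a) σ^k(N_m(a))`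
says exactly that rescaling coefficients, `∑ c_k x^k ↦ ∑ c_k N_k(a) x^k`, is a ring endomorphism
of `K[x;σ]`; since `N_k(ab) = N_k(a) N_k(b)`, rescaling by `a⁻¹` inverts it. This automorphism
maps `x^n - N_n(a)` to `N_n(a) (x^n - 1)`, and its inverse maps `x^n - 1` to a unit multiple of
`x^n - N_n(a)`, so it descends to an isomorphism of the two quotients, which is `θ`.
-/

open Finset

namespace RingQuot

variable {R S : Type*} [Semiring R] [Semiring S] {r : R → R → Prop} {s : S → S → Prop}

def ringEquivOfRel (e : R ≃+* S)
    (hr : ∀ ⦃p q⦄, r p q → mkRingHom s (e p) = mkRingHom s (e q))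
    (hs : ∀ ⦃p q⦄, s p q → mkRingHom r (e.symm p) = mkRingHom r (e.symm q)) :
    RingQuot r ≃+* RingQuot s :=
  RingEquiv.ofRingHom (lift ⟨(mkRingHom s).comp e, fun _ _ h => by simpa using hr h⟩)
    (lift ⟨(mkRingHom r).comp e.symm, fun _ _ h => by simpa using hs h⟩)
    (ringQuot_ext _ _ <| RingHom.ext fun z => by simp)
    (ringQuot_ext _ _ <| RingHom.ext fun z => by simp)

@[simp]
lemma ringEquivOfRel_mkRingHom (e : R ≃+* S)
    (hr : ∀ ⦃p q⦄, r p q → mkRingHom s (e p) = mkRingHom s (e q))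
    (hs : ∀ ⦃p q⦄, s p q → mkRingHom r (e.symm p) = mkRingHom r (e.symm q)) (z : R) :
    ringEquivOfRel e hr hs (mkRingHom r z) = mkRingHom s (e z) :=
  lift_mkRingHom_apply _ _ z

lemma mkRingHom_eq_zero_of_rel_zero (a : R) :
    mkRingHom (fun p q : R => p = a ∧ q = 0) a = 0 := by
  rw [mkRingHom_rel ⟨rfl, rfl⟩, map_zero]

def ringEquivOfMapEqMul (e : R ≃+* S) {a d : R} {b c : S}
    (hab : e a = c * b) (hba : e.symm b = d * a) :
    RingQuot (fun p q : R => p = a ∧ q = 0) ≃+* RingQuot (fun p q : S => p = b ∧ q = 0) :=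
  ringEquivOfRel e
    (by
      rintro _ _ ⟨rfl, rfl⟩
      rw [hab, map_mul, mkRingHom_eq_zero_of_rel_zero, mul_zero, map_zero, map_zero])
    (by
      rintro _ _ ⟨rfl, rfl⟩
      rw [hba, map_mul, mkRingHom_eq_zero_of_rel_zero, mul_zero, map_zero, map_zero])

@[simp]
lemma ringEquivOfMapEqMul_mkRingHom (e : R ≃+* S) {a d : R} {b c : S} (hab : e a = c * b)
    (hba : e.symm b = d * a) (z : R) :
    ringEquivOfMapEqMul e hab hba (mkRingHom _ z) = mkRingHom _ (e z) :=
  ringEquivOfRel_mkRingHom _ _ _ z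

end RingQuot

noncomputable section

namespace SkewPoly

section PartialNorm

variable {K : Type*} [CommRing K]

def partialNorm (σ : K ≃+* K) (a : K) (k : ℕ) : K := ∏ j ∈ range k, (σ ^ j) a

variable (σ : K ≃+* K)

@[simp]
lemma partialNorm_zero (a : K) : partialNorm σ a 0 = 1 := prod_range_zero _

@[simp]
lemma partialNorm_one (k : ℕ) : partialNorm σ 1 k = 1 := by simp [partialNorm]

lemma partialNorm_mul (a b : K) (k : ℕ) :
    partialNorm σ (a * b) k = partialNorm σ a k * partialNorm σ b k := by
  simp [partialNorm, prod_mul_distrib]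

lemma partialNorm_add (a : K) (k m : ℕ) :
    partialNorm σ a (k + m) = partialNorm σ a k * (σ ^ k) (partialNorm σ a m) := by
  simp only [partialNorm, prod_range_add, map_prod, ← RingAut.mul_apply, ← pow_add]

lemma partialNorm_inv_mul (u : Kˣ) (k : ℕ) :
    partialNorm σ ↑u⁻¹ k * partialNorm σ u k = 1 := by
  rw [← partialNorm_mul, Units.inv_mul, partialNorm_one]

end PartialNorm

section Semiring

variable {K R : Type*} [CommRing K] [Semiring R] (σ : K ≃+* K) (i : K →+* R) (x : R)

def sumMonomials : (ℕ →₀ K) →+ R :=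
  Finsupp.liftAddHom fun k => (AddMonoidHom.mulRight (x ^ k)).comp i.toAddMonoidHom

lemma sumMonomials_apply (c : ℕ →₀ K) :
    sumMonomials i x c = c.sum fun k ck => i ck * x ^ k :=
  Finsupp.liftAddHom_apply _ _

@[simp]
lemma sumMonomials_single (k : ℕ) (c : K) :
    sumMonomials i x (Finsupp.single k c) = i c * x ^ k :=
  Finsupp.liftAddHom_apply_single _ _ _

variable {σ i x}

lemma pow_mul_comm (hcomm : ∀ c : K, x * i c = i (σ c) * x) (k : ℕ) (c : K) :
    x ^ k * i c = i ((σ ^ k) c) * x ^ k := by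
  induction k with
  | zero => simp
  | succ k ih =>
    rw [pow_succ', mul_assoc, ih, ← mul_assoc, hcomm, mul_assoc, ← pow_succ', pow_succ' σ,
      RingAut.mul_apply]

lemma monomial_mul_monomial (hcomm : ∀ c : K, x * i c = i (σ c) * x) (b c : K) (k m : ℕ) :
    i b * x ^ k * (i c * x ^ m) = i (b * (σ ^ k) c) * x ^ (k + m) := by
  rw [mul_assoc, ← mul_assoc (x ^ k), pow_mul_comm hcomm, mul_assoc, ← pow_add, ← mul_assoc,
    ← map_mul]

section Basis

variable (hfree : ∀ z : R, ∃! c : ℕ →₀ K, z = c.sum fun k ck => i ck * x ^ k)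

def coeffEquiv : (ℕ →₀ K) ≃+ R :=
  AddEquiv.ofBijective (sumMonomials i x) <| (Function.bijective_iff_existsUnique _).2 fun z => by
    simpa only [sumMonomials_apply, eq_comm] using hfree z

@[simp]
lemma coeffEquiv_single (k : ℕ) (c : K) :
    coeffEquiv hfree (Finsupp.single k c) = i c * x ^ k :=
  sumMonomials_single i x k c

@[simp]
lemma coeffEquiv_symm_monomial (c : K) (k : ℕ) :
    (coeffEquiv hfree).symm (i c * x ^ k) = Finsupp.single k c :=
  (coeffEquiv hfree).symm_apply_eq.2 (coeffEquiv_single hfree k c).symm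

include hfree in
lemma addMonoidHom_ext {M : Type*} [AddCommMonoid M] {f g : R →+ M}
    (h : ∀ c k, f (i c * x ^ k) = g (i c * x ^ k)) : f = g := by
  have hcomp : f.comp (coeffEquiv hfree).toAddMonoidHom =
      g.comp (coeffEquiv hfree).toAddMonoidHom :=
    Finsupp.addHom_ext fun k c => by simpa using h c k
  ext z
  simpa using DFunLike.congr_fun hcomp ((coeffEquiv hfree).symm z)

variable (σ) in
def twist (a : K) : R →+ R :=
  (Finsupp.liftAddHom fun k => (AddMonoidHom.mulRight (x ^ k)).comp
    (i.toAddMonoidHom.comp (AddMonoidHom.mulRight (partialNorm σ a k)))).comp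
    (coeffEquiv hfree).symm.toAddMonoidHom

lemma twist_monomial (a c : K) (k : ℕ) :
    twist σ hfree a (i c * x ^ k) = i (c * partialNorm σ a k) * x ^ k := by
  simp [twist]

lemma twist_algebraMap (a c : K) : twist σ hfree a (i c) = i c := by
  simpa using twist_monomial hfree a c 0

lemma twist_pow (a : K) (k : ℕ) : twist σ hfree a (x ^ k) = i (partialNorm σ a k) * x ^ k := by
  simpa using twist_monomial hfree a 1 k

lemma twist_twist (a b : K) (z : R) :
    twist σ hfree a (twist σ hfree b z) = twist σ hfree (a * b) z := by
  refine DFunLike.congr_fun (addMonoidHom_ext hfree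
    (f := (twist σ hfree a).comp (twist σ hfree b)) fun c k => ?_) z
  simp only [AddMonoidHom.comp_apply, twist_monomial, partialNorm_mul, mul_assoc,
    mul_comm (partialNorm σ b k)]

@[simp]
lemma twist_one (z : R) : twist σ hfree 1 z = z := by
  refine DFunLike.congr_fun (addMonoidHom_ext hfree (g := AddMonoidHom.id R) fun c k => ?_) z
  simp [twist_monomial]

lemma twist_mul (hcomm : ∀ c : K, x * i c = i (σ c) * x) (a : K) (z w : R) :
    twist σ hfree a (z * w) = twist σ hfree a z * twist σ hfree a w := by
  have hmonomial (b : K) (k : ℕ) :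
      twist σ hfree a (i b * x ^ k * w) = twist σ hfree a (i b * x ^ k) * twist σ hfree a w := by
    refine DFunLike.congr_fun (addMonoidHom_ext hfree
      (f := (twist σ hfree a).comp (AddMonoidHom.mulLeft (i b * x ^ k)))
      (g := (AddMonoidHom.mulLeft (twist σ hfree a (i b * x ^ k))).comp (twist σ hfree a))
      fun c m => ?_) w
    simp only [AddMonoidHom.comp_apply, AddMonoidHom.coe_mulLeft, monomial_mul_monomial hcomm,
      twist_monomial, partialNorm_add]
    rw [map_mul (σ ^ k)]
    congr 2
    ring
  exact DFunLike.congr_fun (addMonoidHom_ext hfree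
    (f := (twist σ hfree a).comp (AddMonoidHom.mulRight w))
    (g := (AddMonoidHom.mulRight (twist σ hfree a w)).comp (twist σ hfree a)) hmonomial) z

def twistEquiv (hcomm : ∀ c : K, x * i c = i (σ c) * x) (u : Kˣ) : R ≃+* R where
  toFun := twist σ hfree u
  invFun := twist σ hfree ↑u⁻¹
  left_inv z := by rw [twist_twist, Units.inv_mul, twist_one]
  right_inv z := by rw [twist_twist, Units.mul_inv, twist_one]
  map_mul' := twist_mul hfree hcomm u
  map_add' := map_add _

@[simp]
lemma twistEquiv_apply (hcomm : ∀ c : K, x * i c = i (σ c) * x) (u : Kˣ) (z : R) :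
    twistEquiv hfree hcomm u z = twist σ hfree u z := rfl

end Basis

end Semiring

section Ring

variable {K R : Type*} [CommRing K] [Ring R] {σ : K ≃+* K} {i : K →+* R} {x : R}
  (hfree : ∀ z : R, ∃! c : ℕ →₀ K, z = c.sum fun k ck => i ck * x ^ k)

lemma twist_pow_sub_partialNorm (a : K) (n : ℕ) :
    twist σ hfree a (x ^ n - i (partialNorm σ a n)) = i (partialNorm σ a n) * (x ^ n - 1) := by
  rw [map_sub, twist_pow, twist_algebraMap, mul_sub_one]

lemma twist_inv_pow_sub_one (u : Kˣ) (n : ℕ) :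
    twist σ hfree ↑u⁻¹ (x ^ n - 1) =
      i (partialNorm σ ↑u⁻¹ n) * (x ^ n - i (partialNorm σ u n)) := by
  rw [map_sub, twist_pow, ← map_one i, twist_algebraMap, mul_sub, ← map_mul,
    partialNorm_inv_mul]

end Ring

end SkewPoly

end

open SkewPoly

theorem stmt12_general (K : Type) [Field K] (σ : K ≃+* K) (n : ℕ) (a lam : K) (ha : a ≠ 0)
    (hnorm : ∏ j ∈ Finset.range n, (σ ^ j) a = lam)
    (R : Type) [Ring R] (i : K →+* R) (x : R)
    (hcomm : ∀ c : K, x * i c = i (σ c) * x)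
    (hfree : ∀ z : R, ∃! c : ℕ →₀ K, z = c.sum fun k ck => i ck * x ^ k) :
    ∃ θ : RingQuot (fun p q : R => p = x ^ n - i lam ∧ q = 0) ≃+*
          RingQuot (fun p q : R => p = x ^ n - 1 ∧ q = 0),
      (∀ c : Fin n → K,
        θ (∑ k : Fin n, RingQuot.mkRingHom (fun p q : R => p = x ^ n - i lam ∧ q = 0)
              (i (c k) * x ^ (k : ℕ)))
          = ∑ k : Fin n, RingQuot.mkRingHom (fun p q : R => p = x ^ n - 1 ∧ q = 0)
              (i (c k * ∏ j ∈ Finset.range (k : ℕ), (σ ^ j) a) * x ^ (k : ℕ))) ∧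
      (∀ μ : K, σ μ = μ →
        θ (RingQuot.mkRingHom (fun p q : R => p = x ^ n - i lam ∧ q = 0) (i μ))
          = RingQuot.mkRingHom (fun p q : R => p = x ^ n - 1 ∧ q = 0) (i μ)) := by
  obtain rfl : partialNorm σ a n = lam := hnorm
  let θ := twistEquiv hfree hcomm (Units.mk0 a ha)
  have hθ : θ (x ^ n - i (partialNorm σ a n)) = i (partialNorm σ a n) * (x ^ n - 1) :=
    twist_pow_sub_partialNorm hfree a n
  have hθsymm :
      θ.symm (x ^ n - 1) = i (partialNorm σ a⁻¹ n) * (x ^ n - i (partialNorm σ a n)) :=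
    twist_inv_pow_sub_one hfree (Units.mk0 a ha) n
  refine ⟨RingQuot.ringEquivOfMapEqMul θ hθ hθsymm, fun c => ?_, fun μ _ => ?_⟩
  · simp only [map_sum, RingQuot.ringEquivOfMapEqMul_mkRingHom, θ, twistEquiv_apply,
      twist_monomial]
    rfl
  · simp only [RingQuot.ringEquivOfMapEqMul_mkRingHom, θ, twistEquiv_apply, twist_algebraMap]

/-- if `λ = N_{K/K^σ}(a)`, then `θ(Σ aᵢ xⁱ) = Σ aᵢ·Nᵢ(a)·yⁱ`, where
`Nᵢ(a) = a·σ(a)···σ^{i−1}(a)`, defines an isomorphism of `K^σ`-algebras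
`K[x;σ]/(xⁿ−λ) ≅ K[y;σ]/(yⁿ−1)` (both realized as quotients of the skew polynomial ring
`R = K[x;σ]`, axiomatized as in the paper). -/
theorem stmt12 (K : Type) [Field K] (σ : K ≃+* K) (n : ℕ) (hn : 0 < n)
    (hord : orderOf σ = n) (a lam : K) (ha : a ≠ 0)
    (hnorm : ∏ j ∈ Finset.range n, (σ ^ j) a = lam)
    (R : Type) [Ring R] (i : K →+* R) (x : R)
    (hcomm : ∀ c : K, x * i c = i (σ c) * x)
    (hfree : ∀ z : R, ∃! c : ℕ →₀ K, z = c.sum fun k ck => i ck * x ^ k) :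
    ∃ θ : RingQuot (fun p q : R => p = x ^ n - i lam ∧ q = 0) ≃+*
          RingQuot (fun p q : R => p = x ^ n - 1 ∧ q = 0),
      (∀ c : Fin n → K,
        θ (∑ k : Fin n, RingQuot.mkRingHom (fun p q : R => p = x ^ n - i lam ∧ q = 0)
              (i (c k) * x ^ (k : ℕ)))
          = ∑ k : Fin n, RingQuot.mkRingHom (fun p q : R => p = x ^ n - 1 ∧ q = 0)
              (i (c k * ∏ j ∈ Finset.range (k : ℕ), (σ ^ j) a) * x ^ (k : ℕ))) ∧
      (∀ μ : K, σ μ = μ →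
        θ (RingQuot.mkRingHom (fun p q : R => p = x ^ n - i lam ∧ q = 0) (i μ))
          = RingQuot.mkRingHom (fun p q : R => p = x ^ n - 1 ∧ q = 0) (i μ)) :=
  stmt12_general K σ n a lam ha hnorm R i x hcomm hfree
end

section
/- Let M be a field, φ an automorphism of M of finite order n with fixed field F = M^φ, and suppose μ ∈ M* satisfies N_{M/F}(μ) = λ. Then in the cyclic algebra A' = M[y;φ]/(yⁿ − λ), the element y − μ generates a proper left ideal; in particular y − μ is not invertible in A'. -/
open Finsupp Finset

section SkewPolynomial

variable {M R S : Type*} [Semiring M] [Semiring R] [Semiring S] {φ : M →+* M}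

theorem pow_mul_eq_mul_pow_of_mul_eq {i : M →+* R} {y : R}
    (hcomm : ∀ c, y * i c = i (φ c) * y) (k : ℕ) (c : M) :
    y ^ k * i c = i (φ^[k] c) * y ^ k := by
  induction k generalizing c with
  | zero => simp
  | succ k ih =>
    rw [pow_succ, mul_assoc, hcomm, ← mul_assoc, ih, mul_assoc, ← pow_succ,
      Function.iterate_succ_apply]

variable (i : M →+* R) (y : R)

noncomputable def skewSum : (ℕ →₀ M) →+ R :=
  liftAddHom fun k => (AddMonoidHom.mulRight (y ^ k)).comp i.toAddMonoidHom

@[simp]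
theorem skewSum_single (k : ℕ) (a : M) : skewSum i y (single k a) = i a * y ^ k :=
  liftAddHom_apply_single _ _ _

theorem skewSum_apply (c : ℕ →₀ M) : skewSum i y c = c.sum fun k ck => i ck * y ^ k :=
  liftAddHom_apply _ _

variable {i y}

theorem skewSum_single_mul_single (hcomm : ∀ c, y * i c = i (φ c) * y) (k l : ℕ) (a b : M) :
    skewSum i y (single k a) * skewSum i y (single l b) =
      skewSum i y (single (k + l) (a * φ^[k] b)) := by
  simp only [skewSum_single, map_mul, pow_add, mul_assoc, ← mul_assoc (y ^ k),
    pow_mul_eq_mul_pow_of_mul_eq hcomm]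

theorem skewSum_bijective_iff :
    Function.Bijective (skewSum i y) ↔
      ∀ z : R, ∃! c : ℕ →₀ M, z = c.sum fun k ck => i ck * y ^ k := by
  simp only [Function.bijective_iff_existsUnique, skewSum_apply, eq_comm]

/-- `hcomm` and `hfree` say that `R` is the skew polynomial ring `M[y; φ]`; this is its universal
property. -/
noncomputable def skewLift (hcomm : ∀ c, y * i c = i (φ c) * y)
    (hfree : Function.Bijective (skewSum i y)) {j : M →+* S} {v : S}
    (hv : ∀ c, v * j c = j (φ c) * v) : R →+* S :=
  let E := AddEquiv.ofBijective (skewSum i y) hfree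
  have hE (c : ℕ →₀ M) :
      (skewSum j v).comp E.symm.toAddMonoidHom (skewSum i y c) = skewSum j v c :=
    congrArg (skewSum j v) (E.symm_apply_apply c)
  { (skewSum j v).comp E.symm.toAddMonoidHom with
    map_one' := by
      simpa using hE (single 0 1)
    map_mul' := by
      intro z w
      obtain ⟨c, rfl⟩ := E.surjective z
      obtain ⟨d, rfl⟩ := E.surjective w
      simp only [AddEquiv.ofBijective_apply, E, ZeroHom.toFun_eq_coe, AddMonoidHom.toZeroHom_coe]
      induction c using Finsupp.induction_linear with
      | zero => simp
      | add c₁ c₂ h₁ h₂ => simp only [map_add, add_mul, h₁, h₂]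
      | single k a =>
        induction d using Finsupp.induction_linear with
        | zero => simp
        | add d₁ d₂ h₁ h₂ => simp only [map_add, mul_add, h₁, h₂]
        | single l b =>
          rw [skewSum_single_mul_single hcomm, hE, hE, hE, skewSum_single_mul_single hv] }

variable (hcomm : ∀ c, y * i c = i (φ c) * y) (hfree : Function.Bijective (skewSum i y))
  {j : M →+* S} {v : S} (hv : ∀ c, v * j c = j (φ c) * v)

theorem skewLift_skewSum (c : ℕ →₀ M) :
    skewLift hcomm hfree hv (skewSum i y c) = skewSum j v c :=
  congrArg (skewSum j v) ((AddEquiv.ofBijective (skewSum i y) hfree).symm_apply_apply c)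

@[simp]
theorem skewLift_apply_coeff (a : M) : skewLift hcomm hfree hv (i a) = j a := by
  simpa using skewLift_skewSum hcomm hfree hv (single 0 a)

@[simp]
theorem skewLift_gen : skewLift hcomm hfree hv y = v := by
  simpa using skewLift_skewSum hcomm hfree hv (single 1 1)

end SkewPolynomial

theorem Module.toAddMonoidEnd_self_apply {M : Type*} [Semiring M] (c x : M) :
    Module.toAddMonoidEnd M M c x = c * x :=
  rfl

section TwistedMul

variable {M : Type*} [CommSemiring M]

def twistedMul (φ : M →+* M) (μ : M) : AddMonoid.End M :=
  (AddMonoidHom.mulLeft μ).comp φ.toAddMonoidHom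

@[simp]
theorem twistedMul_apply (φ : M →+* M) (μ x : M) : twistedMul φ μ x = μ * φ x := rfl

theorem twistedMul_mul_toAddMonoidEnd (φ : M →+* M) (μ c : M) :
    twistedMul φ μ * Module.toAddMonoidEnd M M c =
      Module.toAddMonoidEnd M M (φ c) * twistedMul φ μ := by
  ext x
  simp [Module.toAddMonoidEnd_self_apply, mul_left_comm]

theorem twistedMul_pow_apply (φ : M →+* M) (μ x : M) (k : ℕ) :
    (twistedMul φ μ ^ k) x = (∏ j ∈ range k, φ^[j] μ) * φ^[k] x := by
  induction k generalizing x with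
  | zero => simp
  | succ k ih =>
    rw [pow_succ, AddMonoid.End.coe_mul, Function.comp_apply, ih, twistedMul_apply,
      iterate_map_mul, prod_range_succ, Function.iterate_succ_apply]
    ring

theorem twistedMul_pow_eq_of_iterate_eq_id {φ : M →+* M} {n : ℕ} (hφ : φ^[n] = id) (μ : M) :
    twistedMul φ μ ^ n = Module.toAddMonoidEnd M M (∏ j ∈ range n, φ^[j] μ) := by
  ext x
  simp [twistedMul_pow_apply, hφ, Module.toAddMonoidEnd_self_apply]

end TwistedMul

theorem twistedMul_sub_toAddMonoidEnd_apply_one {M : Type*} [CommRing M] (φ : M →+* M) (μ : M) :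
    (twistedMul φ μ - Module.toAddMonoidEnd M M μ) 1 = 0 := by
  show μ * φ 1 - μ * 1 = 0
  rw [map_one, sub_self]

section LeftInverse

variable {A : Type*} [Semiring A] {a : A}

theorem mul_ne_one_of_apply_eq_zero {M : Type*} [AddCommMonoid M] (f : A →+* AddMonoid.End M)
    {x : M} (hx : x ≠ 0) (ha : f a x = 0) (r : A) : r * a ≠ 1 := by
  intro h
  simpa [ha, eq_comm, hx] using congrArg (fun r => f r x) h

theorem span_singleton_ne_top_of_forall_mul_ne_one (h : ∀ r, r * a ≠ 1) :
    Submodule.span A {a} ≠ ⊤ := by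
  intro htop
  obtain ⟨r, hr⟩ := Submodule.mem_span_singleton.mp (htop ▸ Submodule.mem_top : (1 : A) ∈ _)
  exact h r hr

theorem not_isUnit_of_forall_mul_ne_one (h : ∀ r, r * a ≠ 1) : ¬IsUnit a := fun ha =>
  let ⟨r, hr⟩ := ha.exists_left_inv
  h r hr

end LeftInverse

theorem stmt17_general (M : Type) [Field M] (φ : M ≃+* M) (n : ℕ)
    (hord : orderOf φ = n) (μ : M) (lam : M)
    (hnorm : ∏ j ∈ Finset.range n, (φ ^ j) μ = lam)
    (R : Type) [Ring R] (i : M →+* R) (y : R)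
    (hcomm : ∀ c : M, y * i c = i (φ c) * y)
    (hfree : ∀ z : R, ∃! c : ℕ →₀ M, z = c.sum fun k ck => i ck * y ^ k) :
    (Submodule.span (RingQuot (fun p q : R => p = y ^ n - i lam ∧ q = 0))
        {RingQuot.mkRingHom (fun p q : R => p = y ^ n - i lam ∧ q = 0) (y - i μ)} ≠ ⊤) ∧
    ¬ IsUnit (RingQuot.mkRingHom (fun p q : R => p = y ^ n - i lam ∧ q = 0) (y - i μ)) := by
  have hφn : (⇑φ)^[n] = id := by rw [← RingAut.coe_pow, ← hord, pow_orderOf_eq_one]; rfl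
  have hv := twistedMul_mul_toAddMonoidEnd (φ : M →+* M) μ
  have hbij := skewSum_bijective_iff.mpr hfree
  let rep := skewLift (φ := (φ : M →+* M)) hcomm hbij hv
  have hrep_y : rep y = twistedMul φ μ := skewLift_gen hcomm hbij hv
  have hrep_i (c : M) : rep (i c) = Module.toAddMonoidEnd M M c :=
    skewLift_apply_coeff hcomm hbij hv c
  have hrel : ∀ ⦃p q : R⦄, p = y ^ n - i lam ∧ q = 0 → rep p = rep q := by
    rintro p q ⟨rfl, rfl⟩
    rw [map_zero, map_sub, map_pow, hrep_y, hrep_i, twistedMul_pow_eq_of_iterate_eq_id hφn,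
      ← hnorm]
    simp [RingAut.coe_pow]
  have hker : RingQuot.lift ⟨rep, hrel⟩ (RingQuot.mkRingHom _ (y - i μ)) 1 = 0 := by
    rw [RingQuot.lift_mkRingHom_apply, map_sub, hrep_y, hrep_i]
    exact twistedMul_sub_toAddMonoidEnd_apply_one φ μ
  have hleft := mul_ne_one_of_apply_eq_zero _ one_ne_zero hker
  exact ⟨span_singleton_ne_top_of_forall_mul_ne_one hleft,
    not_isUnit_of_forall_mul_ne_one hleft⟩

/-- let `φ` be an automorphism of `M` of order `n` with fixed field `F = M^φ`,
and `μ ∈ M*` with `N_{M/F}(μ) = λ`. Then in the cyclic algebra `A' = M[y;φ]/(yⁿ − λ)`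
(realized as a quotient of the skew polynomial ring, axiomatized by `y·c = φ(c)·y` and the
unique-representation property), the element `y − μ` generates a proper left ideal; in
particular `y − μ` is not invertible. -/
theorem stmt17 (M : Type) [Field M] (φ : M ≃+* M) (n : ℕ) (hn : 0 < n)
    (hord : orderOf φ = n) (μ : M) (hμ : μ ≠ 0) (lam : M)
    (hnorm : ∏ j ∈ Finset.range n, (φ ^ j) μ = lam)
    (R : Type) [Ring R] (i : M →+* R) (y : R)
    (hcomm : ∀ c : M, y * i c = i (φ c) * y)
    (hfree : ∀ z : R, ∃! c : ℕ →₀ M, z = c.sum fun k ck => i ck * y ^ k) :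
    (Submodule.span (RingQuot (fun p q : R => p = y ^ n - i lam ∧ q = 0))
        {RingQuot.mkRingHom (fun p q : R => p = y ^ n - i lam ∧ q = 0) (y - i μ)} ≠ ⊤) ∧
    ¬ IsUnit (RingQuot.mkRingHom (fun p q : R => p = y ^ n - i lam ∧ q = 0) (y - i μ)) :=
  stmt17_general M φ n hord μ lam hnorm R i y hcomm hfree
end

section
/- Let K be a field, σ an automorphism of K with fixed field F, and suppose the Galois extension K/F is cyclic of degree n generated by σ. Let α ∈ K generate a normal basis of K/F and set β = α^{−1}σ(α). Then N_{K/F}(β) = 1, and for any 0 ≤ i < j ≤ n−1 the elements σ^i(β) and σ^j(β) give distinct left ideals: the skew polynomials x − σ^i(β) and x − σ^j(β) in K[x;σ] are not left-associates (they generate distinct left ideals). -/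
open Finset

section Norm

variable {K : Type*} [Field K]

lemma pow_apply_inv_mul_apply (σ : K ≃+* K) (α : K) (j : ℕ) :
    (σ ^ j) (α⁻¹ * σ α) = ((σ ^ j) α)⁻¹ * σ ((σ ^ j) α) := by
  rw [map_mul, map_inv₀, ← RingAut.mul_apply, ← pow_succ, pow_succ', RingAut.mul_apply]

lemma prod_range_pow_apply_inv_mul_apply (σ : K ≃+* K) {α : K} (hα : α ≠ 0) (m : ℕ) :
    ∏ j ∈ range m, (σ ^ j) (α⁻¹ * σ α) = α⁻¹ * (σ ^ m) α := by
  induction m with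
  | zero => simp [hα]
  | succ m ih =>
    have hαm : (σ ^ m) α ≠ 0 := (map_ne_zero _).mpr hα
    rw [prod_range_succ, ih, pow_apply_inv_mul_apply, pow_succ', RingAut.mul_apply]
    field_simp

lemma prod_range_orderOf_pow_apply_inv_mul_apply (σ : K ≃+* K) {α : K} (hα : α ≠ 0) :
    ∏ j ∈ range (orderOf σ), (σ ^ j) (α⁻¹ * σ α) = 1 := by
  rw [prod_range_pow_apply_inv_mul_apply σ hα, pow_orderOf_eq_one, RingAut.one_apply,
    inv_mul_cancel₀ hα]

end Norm

section NormalBasis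

variable {K : Type} [Field K]

lemma apply_div_eq_div_of_inv_mul_apply_eq (σ : K ≃+* K) {γ δ : K} (hγ : γ ≠ 0) (hδ : δ ≠ 0)
    (h : γ⁻¹ * σ γ = δ⁻¹ * σ δ) : σ (γ / δ) = γ / δ := by
  have hσδ : σ δ ≠ 0 := (map_ne_zero σ).mpr hδ
  rw [map_div₀, div_eq_div_iff hσδ hδ]
  field_simp at h
  linear_combination h

lemma pow_apply_inv_mul_apply_injective {σ : K ≃+* K} {n : ℕ} {α : K}
    (hnb : LinearIndependent (fixedSubfield σ) (fun j : Fin n => (σ ^ (j : ℕ)) α)) :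
    Function.Injective fun j : Fin n => (σ ^ (j : ℕ)) (α⁻¹ * σ α) := by
  intro i j hβ
  by_contra hij
  set v := fun j : Fin n => (σ ^ (j : ℕ)) α
  simp only [pow_apply_inv_mul_apply] at hβ
  have hfix := apply_div_eq_div_of_inv_mul_apply_eq σ (hnb.ne_zero i) (hnb.ne_zero j) hβ
  let c : fixedSubfield σ := ⟨v i / v j, hfix⟩
  have hrel : (1 : fixedSubfield σ) • v i + (-c) • v j = 0 := by
    simp [c, Subfield.smul_def, div_mul_cancel₀ _ (hnb.ne_zero j)]
  exact one_ne_zero ((LinearIndepOn.pair_iff v hij).mp (hnb.linearIndepOn _) 1 (-c) hrel).1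

end NormalBasis

lemma Finsupp.eq_zero_of_apply_eq_apply_succ_mul {M : Type*} [MonoidWithZero M] (f : ℕ →₀ M)
    (t : ℕ → M) {n : ℕ} (h : ∀ m, n ≤ m → f m = f (m + 1) * t m) : f n = 0 := by
  by_contra hn
  have hne : ∀ k, f (n + k) ≠ 0 := by
    intro k
    induction k with
    | zero => exact hn
    | succ k ih =>
      intro h0
      rw [← add_assoc] at h0
      exact ih (by rw [h _ (Nat.le_add_right n k), h0, zero_mul])
  exact Set.infinite_of_injective_forall_mem (add_right_injective n) hne f.hasFiniteSupport

section SkewPolynomial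

variable {K R : Type*} [Ring K] [Ring R]

noncomputable def skewEval (i : K →+* R) (x : R) : (ℕ →₀ K) →+ R :=
  Finsupp.liftAddHom fun k => (AddMonoidHom.mulRight (x ^ k)).comp i.toAddMonoidHom

variable {σ : K ≃+* K} {i : K →+* R} {x : R}

lemma skewEval_apply (c : ℕ →₀ K) : skewEval i x c = c.sum fun k ck => i ck * x ^ k := rfl

lemma skewEval_single (k : ℕ) (a : K) : skewEval i x (Finsupp.single k a) = i a * x ^ k :=
  Finsupp.liftAddHom_apply_single _ _ _

lemma skewEval_bijective (hrepr : ∀ z : R, ∃! c : ℕ →₀ K, z = c.sum fun k ck => i ck * x ^ k) :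
    Function.Bijective (skewEval i x) :=
  ⟨fun _ _ h => (hrepr _).unique rfl h, fun z => (hrepr z).exists.imp fun _ h => h.symm⟩

lemma skewEval_mapDomain_succ (c : ℕ →₀ K) :
    skewEval i x (c.mapDomain Nat.succ) = skewEval i x c * x := by
  rw [skewEval_apply, skewEval_apply, Finsupp.sum_mapDomain_index (by simp) (by simp [add_mul]),
    Finsupp.sum_mul]
  simp only [mul_assoc, pow_succ]

lemma pow_mul_apply_of_mul_apply (hσ : ∀ a : K, x * i a = i (σ a) * x) (k : ℕ) (a : K) :
    x ^ k * i a = i ((σ ^ k) a) * x ^ k := by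
  induction k generalizing a with
  | zero => simp
  | succ k ih =>
    rw [pow_succ', mul_assoc, ih, ← mul_assoc, hσ, mul_assoc, pow_succ' σ, RingAut.mul_apply]

noncomputable def twistMul (σ : K ≃+* K) (b : K) (c : ℕ →₀ K) : ℕ →₀ K :=
  Finsupp.onFinset c.support (fun k => c k * (σ ^ k) b) fun _ hk =>
    Finsupp.mem_support_iff.mpr fun h => hk (by rw [h, zero_mul])

lemma twistMul_apply (b : K) (c : ℕ →₀ K) (k : ℕ) : twistMul σ b c k = c k * (σ ^ k) b := rfl

lemma skewEval_twistMul (hσ : ∀ a : K, x * i a = i (σ a) * x) (b : K) (c : ℕ →₀ K) :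
    skewEval i x (twistMul σ b c) = skewEval i x c * i b := by
  rw [skewEval_apply, skewEval_apply, twistMul, Finsupp.onFinset_sum _ (by simp), Finsupp.sum_mul]
  refine sum_congr rfl fun k _ => ?_
  simp only [map_mul, mul_assoc, pow_mul_apply_of_mul_apply hσ]

lemma eq_of_sub_eq_mul_sub (hσ : ∀ a : K, x * i a = i (σ a) * x)
    (hrepr : ∀ z : R, ∃! c : ℕ →₀ K, z = c.sum fun k ck => i ck * x ^ k)
    {b b' : K} {r : R} (h : x - i b = r * (x - i b')) : b = b' := by
  obtain ⟨c, rfl⟩ := (skewEval_bijective hrepr).2 r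
  have hcoeff :
      Finsupp.single 1 1 - Finsupp.single 0 b = c.mapDomain Nat.succ - twistMul σ b' c := by
    apply (skewEval_bijective hrepr).1
    rw [map_sub, map_sub, skewEval_single, skewEval_single, skewEval_mapDomain_succ,
      skewEval_twistMul hσ, ← mul_sub, ← h]
    simp
  have hcoeff_at (m : ℕ) := DFunLike.congr_fun hcoeff m
  have hshift (k : ℕ) : c.mapDomain Nat.succ (k + 1) = c k :=
    Finsupp.mapDomain_apply Nat.succ_injective c k
  have hc1 : c 1 = 0 := by
    refine Finsupp.eq_zero_of_apply_eq_apply_succ_mul c (fun m => (σ ^ (m + 1)) b') fun m hm => ?_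
    obtain ⟨k, rfl⟩ := Nat.exists_eq_add_of_le' hm
    have h := hcoeff_at (k + 1 + 1)
    rw [Finsupp.sub_apply, Finsupp.sub_apply, Finsupp.single_eq_of_ne (by omega),
      Finsupp.single_eq_of_ne (by omega), sub_zero, hshift, twistMul_apply, eq_comm,
      sub_eq_zero] at h
    exact h
  have h0 : b = c 0 * b' := by
    simpa [twistMul_apply, Finsupp.mapDomain_of_notMem_range] using hcoeff_at 0
  have h1 : 1 = c 0 := by simpa [twistMul_apply, hshift, hc1] using hcoeff_at 1
  rw [h0, ← h1, one_mul]

lemma eq_of_span_singleton_sub_eq (hσ : ∀ a : K, x * i a = i (σ a) * x)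
    (hrepr : ∀ z : R, ∃! c : ℕ →₀ K, z = c.sum fun k ck => i ck * x ^ k) {b b' : K}
    (h : (Submodule.span R {x - i b} : Submodule R R) = Submodule.span R {x - i b'}) : b = b' := by
  obtain ⟨r, hr⟩ := Submodule.mem_span_singleton.mp (h ▸ Submodule.mem_span_singleton_self _)
  exact eq_of_sub_eq_mul_sub hσ hrepr hr.symm

end SkewPolynomial

theorem stmt19_general (K : Type) [Field K] (σ : K ≃+* K) (n : ℕ)
    (hord : orderOf σ = n)
    (α : K) (hα : α ≠ 0)
    (hnb : LinearIndependent (fixedSubfield σ) (fun j : Fin n => (σ ^ (j : ℕ)) α))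
    (β : K) (hβ : β = α⁻¹ * σ α) :
    (∏ j ∈ Finset.range n, (σ ^ j) β = 1) ∧
    (∀ (R : Type) [Ring R], ∀ (i : K →+* R) (x : R),
      (∀ c : K, x * i c = i (σ c) * x) →
      (∀ z : R, ∃! c : ℕ →₀ K, z = c.sum fun k ck => i ck * x ^ k) →
      ∀ iv jv : Fin n, iv ≠ jv →
        (Submodule.span R {x - i ((σ ^ (iv : ℕ)) β)} : Submodule R R)
          ≠ Submodule.span R {x - i ((σ ^ (jv : ℕ)) β)}) := by
  subst hβ hord
  refine ⟨prod_range_orderOf_pow_apply_inv_mul_apply σ hα, ?_⟩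
  intro R _ i x hσ hrepr iv jv hij hspan
  exact hij (pow_apply_inv_mul_apply_injective hnb (eq_of_span_singleton_sub_eq hσ hrepr hspan))

/-- let `K/F` be cyclic of degree `n` generated by `σ` (`F = K^σ`), `α` a normal
basis generator and `β = α⁻¹σ(α)`. Then `N_{K/F}(β) = 1`, and for `i ≠ j` (`0 ≤ i, j ≤ n−1`)
the skew polynomials `x − σⁱ(β)` and `x − σʲ(β)` in `K[x;σ]` generate distinct left ideals
(they are not left associates). -/
theorem stmt19 (K : Type) [Field K] (σ : K ≃+* K) (n : ℕ) (hn : 0 < n)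
    (hord : orderOf σ = n)
    (α : K) (hα : α ≠ 0)
    (hnb : LinearIndependent (fixedSubfield σ) (fun j : Fin n => (σ ^ (j : ℕ)) α))
    (β : K) (hβ : β = α⁻¹ * σ α) :
    (∏ j ∈ Finset.range n, (σ ^ j) β = 1) ∧
    (∀ (R : Type) [Ring R], ∀ (i : K →+* R) (x : R),
      (∀ c : K, x * i c = i (σ c) * x) →
      (∀ z : R, ∃! c : ℕ →₀ K, z = c.sum fun k ck => i ck * x ^ k) →
      ∀ iv jv : Fin n, iv ≠ jv →
        (Submodule.span R {x - i ((σ ^ (iv : ℕ)) β)} : Submodule R R)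
          ≠ Submodule.span R {x - i ((σ ^ (jv : ℕ)) β)}) :=
  stmt19_general K σ n hord α hα hnb β hβ
end
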